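/- arXiv:2503.06718 — 3 statements merged into one kernel-verified Lean document; each statement's English description precedes it below -/
import Mathlib

section
/- Let G be a strongly connected digraph and C a cycle (not necessarily directed) in G. Then either there is an edge e of C such that G\e is strongly connected, or there is a partition (A,B) of V(G) into nonempty sets such that there is exactly one edge from A to B and exactly one edge from B to A. -/
open SimpleGraph Set

variable {V W : Type*}

/-- An embedding witnessing that `G` contains a subdivision of `H` as a subgraph:
branch vertices are given by the injection `f`, and every edge of `H` is replaced by
a path of `G`, these paths being internally disjoint from each other and from the
branch vertices. -/
structure SubdivEmb (H : SimpleGraph W) (G : SimpleGraph V) where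
  f : W → V
  inj : Function.Injective f
  walk : ∀ ⦃a b : W⦄, H.Adj a b → G.Walk (f a) (f b)
  isPath : ∀ ⦃a b : W⦄ (h : H.Adj a b), (walk h).IsPath
  symm : ∀ ⦃a b : W⦄ (h : H.Adj a b), walk h.symm = (walk h).reverse
  branch : ∀ ⦃a b : W⦄ (h : H.Adj a b) (w : W), f w ∈ (walk h).support → w = a ∨ w = b
  disjoint : ∀ ⦃a b c d : W⦄ (h₁ : H.Adj a b) (h₂ : H.Adj c d), s(a,b) ≠ s(c,d) →
    ∀ x, x ∈ (walk h₁).support → x ∈ (walk h₂).support → x ∈ Set.range f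

/-- `G` contains a subdivision of `H` as a subgraph. -/
def ContainsSubdiv (G : SimpleGraph V) (H : SimpleGraph W) : Prop :=
  Nonempty (SubdivEmb H G)

/-- Witness that `G` is (exactly) a subdivision of `H`: a subdivision embedding
covering all vertices and edges of `G`. -/
structure SubdivIso (H : SimpleGraph W) (G : SimpleGraph V) extends SubdivEmb H G where
  vert_cover : ∀ x : V, x ∈ Set.range f ∨ ∃ (a b : W) (h : H.Adj a b), x ∈ (walk h).support
  edge_cover : ∀ e ∈ G.edgeSet, ∃ (a b : W) (h : H.Adj a b), e ∈ (walk h).edges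

/-- `G` is a subdivision of `H`. -/
def IsSubdivisionOf (G : SimpleGraph V) (H : SimpleGraph W) : Prop :=
  Nonempty (SubdivIso H G)

/-- Planarity, via Kuratowski's theorem: no subdivision of `K₅` nor of `K_{3,3}`
as a subgraph. -/
def Planar (G : SimpleGraph V) : Prop :=
  ¬ ContainsSubdiv G (completeGraph (Fin 5)) ∧
  ¬ ContainsSubdiv G (completeBipartiteGraph (Fin 3) (Fin 3))

/-- Outerplanarity, via the standard characterization: no subdivision of `K₄` nor
of `K_{2,3}` as a subgraph. -/
def Outerplanar (G : SimpleGraph V) : Prop :=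
  ¬ ContainsSubdiv G (completeGraph (Fin 4)) ∧
  ¬ ContainsSubdiv G (completeBipartiteGraph (Fin 2) (Fin 3))

/-- `G` is `k`-connected. -/
def KConnected (k : ℕ) (G : SimpleGraph V) : Prop :=
  k < Nat.card V ∧ ∀ s : Set V, s.ncard < k → (G.induce sᶜ).Connected

/-- There is no cycle of `G` all of whose edges lie in `F`. -/
def NoCycleIn (G : SimpleGraph V) (F : Set (Sym2 V)) : Prop :=
  ¬ ∃ (v : V) (c : G.Walk v v), c.IsCycle ∧ ∀ e ∈ c.edges, e ∈ F

/-- A nonplanar graph is almost-planar if it is 3-connected and the set of edges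
whose deletion leaves a nonplanar graph contains no cycle (i.e. is the edge set of
a forest). -/
def AlmostPlanar (G : SimpleGraph V) : Prop :=
  ¬ Planar G ∧ KConnected 3 G ∧
    NoCycleIn G {e | e ∈ G.edgeSet ∧ ¬ Planar (G.deleteEdges {e})}

/-- The `k`-rung Möbius ladder: a cycle of length `2k` with opposite vertices joined. -/
def mobiusLadder (k : ℕ) : SimpleGraph (Fin (2*k)) :=
  SimpleGraph.fromRel (fun a b => (b : ℕ) = ((a : ℕ) + 1) % (2*k) ∨ (b : ℕ) = ((a : ℕ) + k) % (2*k))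

/-- The `k`-wheel: a cycle of length `k` plus a hub (`none`) adjacent to every cycle vertex. -/
def wheelGraph (k : ℕ) : SimpleGraph (Option (Fin k)) :=
  SimpleGraph.fromRel (fun a b =>
    match a, b with
    | some i, some j => (j : ℕ) = ((i : ℕ) + 1) % k
    | some _, none => True
    | none, some _ => True
    | none, none => False)

/-- The graph `U₈` (vertices `p_1,…,p_8` are `0,…,7`). -/
def U8 : SimpleGraph (Fin 8) :=
  SimpleGraph.fromRel (fun a b =>
    ((a:ℕ), (b:ℕ)) ∈ [(0,4),(0,6),(0,3),(1,5),(1,7),(1,3),(2,3),(2,4),(2,5),(2,6),(2,7),(4,5),(6,7)])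

/-- The graph `W₈` (vertices `b_1,…,b_8` are `0,…,7`). -/
def W8 : SimpleGraph (Fin 8) :=
  SimpleGraph.fromRel (fun a b =>
    ((a:ℕ), (b:ℕ)) ∈ [(0,1),(1,2),(1,3),(2,4),(3,4),(2,5),(3,6),(4,7),(5,7),(6,7),(0,5),(0,6),(0,4)])

/-- A digraph with a specified vertex set (so that subdigraphs on fewer vertices
make sense). -/
structure Dgraph (V : Type _) where
  verts : Set V
  Adj : V → V → Prop
  mem_of_adj : ∀ ⦃u v : V⦄, Adj u v → u ∈ verts ∧ v ∈ verts

namespace Dgraph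

/-- `D` has no loops and no directed cycles of length two. -/
def NoDigon (D : Dgraph V) : Prop := ∀ u v, D.Adj u v → ¬ D.Adj v u

/-- The underlying (simple) graph of a digraph. -/
def und (D : Dgraph V) : SimpleGraph V where
  Adj u v := u ≠ v ∧ (D.Adj u v ∨ D.Adj v u)
  symm := by
    constructor
    intro u v h
    exact ⟨Ne.symm h.1, h.2.symm⟩
  loopless := by
    constructor
    intro v h
    exact h.1 rfl

/-- Subdigraph containment. -/
def Le (D₁ D₂ : Dgraph V) : Prop :=
  D₁.verts ⊆ D₂.verts ∧ ∀ ⦃u v⦄, D₁.Adj u v → D₂.Adj u v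

/-- A walk of the underlying graph is directed if all its darts are arcs of `D`. -/
def DirWalk (D : Dgraph V) {u v : V} (w : D.und.Walk u v) : Prop :=
  ∀ d ∈ w.darts, D.Adj d.toProd.1 d.toProd.2

/-- Strong connectivity: every vertex can reach every other vertex by a directed walk. -/
def Strong (D : Dgraph V) : Prop :=
  ∀ u ∈ D.verts, ∀ v ∈ D.verts, ∃ w : D.und.Walk u v, D.DirWalk w

/-- Delete the single arc `(a,b)` from `D`. -/
def delArc (D : Dgraph V) (a b : V) : Dgraph V where
  verts := D.verts
  Adj u v := D.Adj u v ∧ ¬ (u = a ∧ v = b)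
  mem_of_adj := fun _ _ h => D.mem_of_adj h.1

/-- `D` is planar if its underlying graph is. -/
def Planar' (D : Dgraph V) : Prop := Planar D.und

/-- `D` is series-parallel if its underlying graph contains no subdivision of `K₄`. -/
def SeriesParallel (D : Dgraph V) : Prop :=
  ¬ ContainsSubdiv D.und (completeGraph (Fin 4))

end Dgraph

/-- A witness that the digraph `D` is (exactly) a directed subdivision of the digraph `H`:
each arc `a → b` of `H` is replaced by a directed path of `D` from `f a` to `f b`, these
paths being internally disjoint, avoiding branch vertices internally, and covering all
vertices and arcs of `D`. -/
structure DirSubdivEmb (H : Dgraph W) (D : Dgraph V) where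
  f : W → V
  inj : Function.Injective f
  maps_verts : ∀ w ∈ H.verts, f w ∈ D.verts
  walk : ∀ ⦃a b : W⦄, H.Adj a b → D.und.Walk (f a) (f b)
  dir : ∀ ⦃a b : W⦄ (h : H.Adj a b), D.DirWalk (walk h)
  isPath : ∀ ⦃a b : W⦄ (h : H.Adj a b), (walk h).IsPath
  branch : ∀ ⦃a b : W⦄ (h : H.Adj a b) (w : W), w ∈ H.verts →
    f w ∈ (walk h).support → w = a ∨ w = b
  disjoint : ∀ ⦃a b c d : W⦄ (h₁ : H.Adj a b) (h₂ : H.Adj c d), (a,b) ≠ (c,d) →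
    ∀ x, x ∈ (walk h₁).support → x ∈ (walk h₂).support → ∃ w ∈ H.verts, f w = x
  vert_cover : ∀ x ∈ D.verts, (∃ w ∈ H.verts, f w = x) ∨
    ∃ (a b : W) (h : H.Adj a b), x ∈ (walk h).support
  edge_cover : ∀ ⦃x y : V⦄, D.Adj x y →
    ∃ (a b : W) (h : H.Adj a b), ∃ d ∈ (walk h).darts, d.toProd = (x, y)

/-- The digraph `D` is a directed subdivision of (a copy of) `H`. -/
def Dgraph.IsDirSubdivOf (D : Dgraph V) (H : Dgraph W) : Prop :=
  Nonempty (DirSubdivEmb H D)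

/-- Build a digraph on `Fin n` from a list of arcs. -/
def arcsD (n : ℕ) (l : List (ℕ × ℕ)) : Dgraph (Fin n) where
  verts := Set.univ
  Adj a b := ((a:ℕ), (b:ℕ)) ∈ l
  mem_of_adj := fun _ _ _ => ⟨trivial, trivial⟩

/-- The digraph whose directed subdivisions are the strong thetas: two directed paths
of length two from `0` to `1` (through `2` resp. `3`) together with a directed return
path `1 → 4 → 0`. -/
def thetaD : Dgraph (Fin 5) := arcsD 5 [(0,2),(2,1),(0,3),(3,1),(1,4),(4,0)]

/-- The digraph whose directed subdivisions are the reinforced thetas: three directed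
paths of length two from `0` to `1` together with the arc `1 → 0`. -/
def reinfThetaD : Dgraph (Fin 5) := arcsD 5 [(0,2),(2,1),(0,3),(3,1),(0,4),(4,1),(1,0)]

/-- The strong directed `K₄` (the strongly connected orientation of `K₄`, unique up
to isomorphism). -/
def strongK4D : Dgraph (Fin 4) := arcsD 4 [(0,1),(1,2),(2,3),(3,0),(0,2),(1,3)]

/-- The `2k`-diwheel: a cycle of length `2k` plus a hub (`none`) adjacent to every
cycle vertex, oriented so that every triangle is a directed triangle. -/
def diwheelD (k : ℕ) : Dgraph (Option (Fin (2*k))) where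
  verts := Set.univ
  Adj a b :=
    match a, b with
    | some i, some j => Even (i:ℕ) ∧
        (((j:ℕ) = ((i:ℕ) + 1) % (2*k)) ∨ ((i:ℕ) = ((j:ℕ) + 1) % (2*k)))
    | some i, none => Odd (i:ℕ)
    | none, some i => Even (i:ℕ)
    | none, none => False
  mem_of_adj := fun _ _ _ => ⟨trivial, trivial⟩

/-- Minimality under subdigraph containment among strongly connected nonplanar digraphs. -/
def MinStrongNonplanar (G : Dgraph V) : Prop :=
  G.Strong ∧ ¬ G.Planar' ∧
    ∀ D' : Dgraph V, D'.Le G → D'.Strong → ¬ D'.Planar' →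
      (D'.verts = G.verts ∧ ∀ u v, D'.Adj u v ↔ G.Adj u v)

/-- A Kuratowski digraph: minimal strongly connected nonplanar, and not a directed
subdivision of a smaller digraph. -/
def KuratowskiDigraph (G : Dgraph V) : Prop :=
  MinStrongNonplanar G ∧
    ¬ ∃ H : Dgraph V, H.verts.ncard < G.verts.ncard ∧ G.IsDirSubdivOf H

/-- The unordered pair `{x,y}` equals `{a,b}`. -/
def pairOf (x y a b : V) : Prop := (x = a ∧ y = b) ∨ (x = b ∧ y = a)

/-- `j` follows `i` in the cyclic order on `Fin n`. -/
def CycPair (n : ℕ) (i j : Fin n) : Prop :=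
  (j:ℕ) = (i:ℕ) + 1 ∨ ((i:ℕ) = n - 1 ∧ (j:ℕ) = 0)

/-- Given the cyclic list `l` of vertices of a cycle `C`, the chords `ab` and `cd`
`C`-cross: `a,b,c,d` are distinct and both paths of `C` between `a` and `b` contain
one of `c,d` (equivalently, exactly one of `c,d` lies strictly between `a` and `b`
in the list). -/
def CCross [DecidableEq V] (l : List V) (a b c d : V) : Prop :=
  ([a, b, c, d] : List V).Nodup ∧
  ∃ x y, ((x = c ∧ y = d) ∨ (x = d ∧ y = c)) ∧
    (min (l.idxOf a) (l.idxOf b) < l.idxOf x ∧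
      l.idxOf x < max (l.idxOf a) (l.idxOf b)) ∧
    ¬ (min (l.idxOf a) (l.idxOf b) < l.idxOf y ∧
      l.idxOf y < max (l.idxOf a) (l.idxOf b))

/-- A Möbius chain: a nonplanar graph obtained from a spanning cycle `C` by adding
chords so that every two chords `C`-cross or share an end, every vertex is an end of
some chord, and no cycle consists entirely of chords. -/
def IsMobiusChain [DecidableEq V] (G : SimpleGraph V) : Prop :=
  ¬ Planar G ∧
  ∃ (v : V) (C : G.Walk v v), C.IsCycle ∧ (∀ x : V, x ∈ C.support) ∧
    (∀ a b c d : V, G.Adj a b → s(a,b) ∉ C.edges → G.Adj c d → s(c,d) ∉ C.edges →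
      s(a,b) ≠ s(c,d) →
      (a = c ∨ a = d ∨ b = c ∨ b = d) ∨ CCross C.support.tail a b c d) ∧
    (∀ x : V, ∃ y, G.Adj x y ∧ s(x,y) ∉ C.edges) ∧
    NoCycleIn G {e | e ∈ G.edgeSet ∧ e ∉ C.edges}

/-- A scallop. -/
def IsScallop (G : SimpleGraph V) : Prop :=
  KConnected 3 G ∧
  (Nonempty (G ≃g completeGraph (Fin 5)) ∨
   ∃ (n : ℕ) (hn : 3 ≤ n) (c : Fin n → V) (u v w : V),
     Function.Injective c ∧ (∀ i, c i ≠ u ∧ c i ≠ v ∧ c i ≠ w) ∧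
     u ≠ v ∧ u ≠ w ∧ v ≠ w ∧
     (∀ x : V, (∃ i, x = c i) ∨ x = u ∨ x = v ∨ x = w) ∧
     (∀ i j, CycPair n i j → G.Adj (c i) (c j)) ∧
     G.Adj u v ∧ G.Adj u (c ⟨0, by omega⟩) ∧ G.Adj u (c ⟨n-1, by omega⟩) ∧
     G.Adj v (c ⟨0, by omega⟩) ∧ G.Adj v (c ⟨n-1, by omega⟩) ∧
     G.Adj w u ∧ G.Adj w v ∧
     (∀ i : Fin n, (i:ℕ) ≠ 0 → (i:ℕ) ≠ n - 1 → G.Adj w (c i)) ∧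
     (∀ x y, G.Adj x y →
       (∃ i j, CycPair n i j ∧ pairOf x y (c i) (c j)) ∨
       pairOf x y u v ∨
       pairOf x y u (c ⟨0, by omega⟩) ∨ pairOf x y u (c ⟨n-1, by omega⟩) ∨
       pairOf x y v (c ⟨0, by omega⟩) ∨ pairOf x y v (c ⟨n-1, by omega⟩) ∨
       pairOf x y w u ∨ pairOf x y w v ∨ (∃ i, pairOf x y w (c i))))

/-- A clam. -/
def IsClam (G : SimpleGraph V) : Prop :=
  KConnected 3 G ∧
  ∃ (n : ℕ) (_ : 3 ≤ n) (c : Fin n → V) (u v : V) (j : Fin n),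
    1 ≤ (j:ℕ) ∧ (j:ℕ) ≤ n - 2 ∧
    Function.Injective c ∧ (∀ i, c i ≠ u ∧ c i ≠ v) ∧ u ≠ v ∧
    (∀ x : V, (∃ i, x = c i) ∨ x = u ∨ x = v) ∧
    (∀ i k, CycPair n i k → G.Adj (c i) (c k)) ∧
    G.Adj u v ∧
    (∀ i : Fin n, G.Adj u (c i) ↔ ((i:ℕ) ≤ (j:ℕ) ∨ (i:ℕ) = n - 1)) ∧
    (∀ i : Fin n, G.Adj v (c i) ↔ ((j:ℕ) ≤ (i:ℕ) ∨ (i:ℕ) = 0)) ∧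
    (∀ x y, G.Adj x y →
      (∃ i k, CycPair n i k ∧ pairOf x y (c i) (c k)) ∨
      pairOf x y u v ∨ (∃ i, pairOf x y u (c i)) ∨ (∃ i, pairOf x y v (c i)))

/-- A whelk. -/
def IsWhelk (G : SimpleGraph V) : Prop :=
  KConnected 3 G ∧
  ∃ (n : ℕ) (_ : 3 ≤ n) (c : Fin n → V) (u v : V) (I J : Fin n),
    1 ≤ (I:ℕ) ∧ (I:ℕ) < (J:ℕ) ∧ (J:ℕ) ≤ n - 1 ∧
    Function.Injective c ∧ (∀ i, c i ≠ u ∧ c i ≠ v) ∧ u ≠ v ∧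
    (∀ x : V, (∃ i, x = c i) ∨ x = u ∨ x = v) ∧
    (∀ i k, CycPair n i k → G.Adj (c i) (c k)) ∧
    G.Adj u v ∧
    (∀ t : Fin n, G.Adj u (c t) ↔ (t:ℕ) ≤ (J:ℕ)) ∧
    (∀ t : Fin n, G.Adj v (c t) ↔ ((J:ℕ) ≤ (t:ℕ) ∨ (t:ℕ) = (I:ℕ))) ∧
    (∀ x y, G.Adj x y →
      (∃ i k, CycPair n i k ∧ pairOf x y (c i) (c k)) ∨
      pairOf x y u v ∨ (∃ i, pairOf x y u (c i)) ∨ (∃ i, pairOf x y v (c i)))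

/-- A double wheel: a 3-connected nonplanar graph consisting of a cycle plus two
adjacent vertices `u,v`, with at most one vertex of the cycle adjacent to both. -/
def IsDoubleWheel (G : SimpleGraph V) : Prop :=
  KConnected 3 G ∧ ¬ Planar G ∧
  ∃ (n : ℕ) (_ : 3 ≤ n) (c : Fin n → V) (u v : V),
    Function.Injective c ∧ (∀ i, c i ≠ u ∧ c i ≠ v) ∧ u ≠ v ∧
    (∀ x : V, (∃ i, x = c i) ∨ x = u ∨ x = v) ∧
    (∀ i k, CycPair n i k → G.Adj (c i) (c k)) ∧
    G.Adj u v ∧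
    (∀ x y, G.Adj x y →
      (∃ i k, CycPair n i k ∧ pairOf x y (c i) (c k)) ∨
      pairOf x y u v ∨ (∃ i, pairOf x y u (c i)) ∨ (∃ i, pairOf x y v (c i))) ∧
    (∀ i k : Fin n, G.Adj u (c i) → G.Adj v (c i) → G.Adj u (c k) → G.Adj v (c k) → i = k)

/-- A conch. -/
def IsConch (G : SimpleGraph V) : Prop :=
  KConnected 3 G ∧
  ∃ (p1 p2 p3 : V) (P Q : G.Walk p1 p2) (R : G.Walk p2 p3),
    p1 ≠ p2 ∧ p2 ≠ p3 ∧ p1 ≠ p3 ∧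
    P.IsPath ∧ Q.IsPath ∧ R.IsPath ∧
    p3 ∉ P.support ∧ p3 ∉ Q.support ∧ p1 ∉ R.support ∧
    (∀ x, x ∈ P.support → x ∈ Q.support → x = p1 ∨ x = p2) ∧
    (∀ x, x ∈ P.support → x ∈ R.support → x = p2) ∧
    (∀ x, x ∈ Q.support → x ∈ R.support → x = p2) ∧
    (∀ x : V, x ∈ P.support ∨ x ∈ Q.support ∨ x ∈ R.support ∨ x = p3) ∧
    (∃ x y, x ≠ y ∧ (x ∈ P.support ∧ x ≠ p1 ∧ x ≠ p2) ∧ (y ∈ P.support ∧ y ≠ p1 ∧ y ≠ p2) ∧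
      G.Adj p3 x ∧ G.Adj p3 y) ∧
    (∃ x y, x ≠ y ∧ (x ∈ Q.support ∧ x ≠ p1 ∧ x ≠ p2) ∧ (y ∈ Q.support ∧ y ≠ p1 ∧ y ≠ p2) ∧
      G.Adj p3 x ∧ G.Adj p3 y) ∧
    (∃ x y, x ≠ y ∧ (x ∈ R.support ∧ x ≠ p2 ∧ x ≠ p3) ∧ (y ∈ R.support ∧ y ≠ p2 ∧ y ≠ p3) ∧
      G.Adj p1 x ∧ G.Adj p1 y) ∧
    (∀ a b, G.Adj a b →
      s(a,b) ∈ P.edges ∨ s(a,b) ∈ Q.edges ∨ s(a,b) ∈ R.edges ∨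
      (∃ x, ((x ∈ P.support ∨ x ∈ Q.support) ∧ x ≠ p1 ∧ x ≠ p2) ∧ pairOf a b p3 x) ∨
      (∃ x, (x ∈ R.support ∧ x ≠ p2 ∧ x ≠ p3) ∧ pairOf a b p1 x) ∨
      pairOf a b p1 p2 ∨ pairOf a b p1 p3)

/-- A mussel. -/
def IsMussel (G : SimpleGraph V) : Prop :=
  KConnected 3 G ∧
  ∃ (p1 p2 p3 : V) (P Q R : G.Walk p1 p2),
    p1 ≠ p2 ∧ p2 ≠ p3 ∧ p1 ≠ p3 ∧
    P.IsPath ∧ Q.IsPath ∧ R.IsPath ∧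
    3 ≤ P.length ∧ 3 ≤ Q.length ∧ 3 ≤ R.length ∧
    p3 ∉ P.support ∧ p3 ∉ Q.support ∧ p3 ∉ R.support ∧
    (∀ x, x ∈ P.support → x ∈ Q.support → x = p1 ∨ x = p2) ∧
    (∀ x, x ∈ P.support → x ∈ R.support → x = p1 ∨ x = p2) ∧
    (∀ x, x ∈ Q.support → x ∈ R.support → x = p1 ∨ x = p2) ∧
    (∀ x : V, x ∈ P.support ∨ x ∈ Q.support ∨ x ∈ R.support ∨ x = p3) ∧
    (∀ x, ((x ∈ P.support ∨ x ∈ Q.support ∨ x ∈ R.support) ∧ x ≠ p1 ∧ x ≠ p2) →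
      G.Adj p3 x) ∧
    ¬ (G.Adj p1 p2 ∧ G.Adj p2 p3 ∧ G.Adj p1 p3) ∧
    (∀ a b, G.Adj a b →
      s(a,b) ∈ P.edges ∨ s(a,b) ∈ Q.edges ∨ s(a,b) ∈ R.edges ∨
      (∃ x, ((x ∈ P.support ∨ x ∈ Q.support ∨ x ∈ R.support) ∧ x ≠ p1 ∧ x ≠ p2) ∧
        pairOf a b p3 x) ∨
      pairOf a b p1 p2 ∨ pairOf a b p1 p3 ∨ pairOf a b p2 p3)

/-- `O` is an orientation of `G`. -/
def IsOrientation (G : SimpleGraph V) (O : V → V → Prop) : Prop :=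
  (∀ u v, G.Adj u v ↔ (O u v ∨ O v u)) ∧ ∀ u v, O u v → ¬ O v u

/-- Every fundamental cycle of the spanning tree `T` of `G` is a directed cycle in
the orientation `O`. -/
def GoodOrient (G T : SimpleGraph V) (O : V → V → Prop) : Prop :=
  ∀ x y, G.Adj x y → ¬ T.Adj x y → ∀ p : T.Walk y x, p.IsPath →
    (O x y ∧ ∀ d ∈ p.darts, O d.toProd.1 d.toProd.2) ∨
    (O y x ∧ ∀ d ∈ p.darts, O d.toProd.2 d.toProd.1)

/-- The rungs of the `k`-rung Möbius ladder. -/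
def isRung (k : ℕ) (a b : Fin (2*k)) : Prop :=
  (b:ℕ) = ((a:ℕ) + k) % (2*k) ∨ (a:ℕ) = ((b:ℕ) + k) % (2*k)


/-!
If no edge of `C` can be deleted, every arc `(c, d)` of `C` is the only arc entering some set
`S` with `d ∈ S` and `c ∉ S` (the vertices that `c` cannot reach without that arc). Choose such
an arc whose smallest such set is as large as possible, and then `S` as large as possible. The
cycle leaves `S` along a second arc `(x, y)`; let `N` be the smallest set entered only by
`(x, y)`. Then `S ∪ N` is again entered only by `(c, d)`, so it is everything by maximality of
`S`; and a nonempty `S ∩ N` would also be entered only by `(c, d)`, giving `(c, d)` a set smaller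
than `N`. Hence `N` is the complement of `S`, and `(S, N)` is the required partition.
-/

theorem Relation.ReflTransGen.exists_rel_notMem_mem {α : Type*} {r : α → α → Prop}
    {S : Set α} {a b : α} (h : Relation.ReflTransGen r a b) (ha : a ∉ S) (hb : b ∈ S) :
    ∃ u w, r u w ∧ u ∉ S ∧ w ∈ S := by
  induction h with
  | refl => exact absurd hb ha
  | @tail u w _ huw ih =>
    by_cases hu : u ∈ S
    · exact ih hu
    · exact ⟨u, w, huw, hu, hb⟩

theorem SimpleGraph.Walk.IsCycle.exists_boundary_edge {G : SimpleGraph V} {u : V}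
    {C : G.Walk u u} (hC : C.IsCycle) {c d : V} (hcd : s(c, d) ∈ C.edges) {X : Set V}
    (hd : d ∈ X) (hc : c ∉ X) :
    ∃ x y, G.Adj x y ∧ x ∈ X ∧ y ∉ X ∧ s(x, y) ∈ C.edges ∧ s(x, y) ≠ s(c, d) := by
  set H := fromEdgeSet {e | e ∈ C.edges}
  have hCH : ∀ e ∈ C.edges, e ∈ H.edgeSet := fun e he => by
    simpa [H, edgeSet_fromEdgeSet] using
      ⟨he, G.not_isDiag_of_mem_edgeSet (C.edges_subset_edgeSet he)⟩
  obtain ⟨p⟩ := (adj_and_reachable_delete_edges_iff_exists_cycle.2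
    ⟨u, C.transfer H hCH, hC.transfer hCH, by rwa [Walk.edges_transfer]⟩).2.symm
  obtain ⟨e, -, hx, hy⟩ := p.exists_boundary_dart X hd hc
  obtain ⟨⟨heC, -⟩, hne⟩ :
      (s(e.fst, e.snd) ∈ C.edges ∧ e.fst ≠ e.snd) ∧ s(e.fst, e.snd) ≠ s(c, d) := by
    simpa [H] using e.adj
  exact ⟨e.fst, e.snd, C.adj_of_mem_edges heC, hx, hy, heC, hne⟩

namespace Dgraph

open Relation

variable {D : Dgraph V}

theorem NoDigon.irrefl (h : D.NoDigon) (u : V) : ¬ D.Adj u u := fun hu => h u u hu hu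

theorem reflTransGen_of_dirWalk {u v : V} (w : D.und.Walk u v) (hw : D.DirWalk w) :
    ReflTransGen D.Adj u v := by
  induction w with
  | nil => rfl
  | cons _ p ih =>
    exact .head (hw _ List.mem_cons_self) (ih fun e he => hw e (List.mem_cons_of_mem _ he))

theorem exists_dirWalk_of_reflTransGen (hirr : ∀ u, ¬ D.Adj u u) {u v : V}
    (h : ReflTransGen D.Adj u v) : ∃ w : D.und.Walk u v, D.DirWalk w := by
  induction h using ReflTransGen.head_induction_on with
  | refl => exact ⟨.nil, by simp [DirWalk]⟩
  | @head a b hab _ ih =>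
    obtain ⟨w, hw⟩ := ih
    refine ⟨.cons ⟨fun (h : a = b) => hirr b (h ▸ hab), .inl hab⟩ w, ?_⟩
    intro e he
    rcases List.mem_cons.1 he with rfl | he
    · exact hab
    · exact hw e he

theorem strong_iff (hv : D.verts = univ) (hirr : ∀ u, ¬ D.Adj u u) :
    D.Strong ↔ ∀ u v, ReflTransGen D.Adj u v :=
  ⟨fun hs u v => (hs u (hv ▸ trivial) v (hv ▸ trivial)).elim reflTransGen_of_dirWalk,
    fun h u _ v _ => exists_dirWalk_of_reflTransGen hirr (h u v)⟩

def OnlyArcInto (D : Dgraph V) (S : Set V) (c d : V) : Prop :=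
  d ∈ S ∧ c ∉ S ∧ ∀ u w, D.Adj u w → u ∉ S → w ∈ S → u = c ∧ w = d

def minOnlyArcInto (D : Dgraph V) (c d : V) : Set V := ⋂₀ {S | D.OnlyArcInto S c d}

variable {S X N : Set V} {c d x y : V}

theorem OnlyArcInto.minOnlyArcInto_subset (h : D.OnlyArcInto S c d) :
    D.minOnlyArcInto c d ⊆ S :=
  sInter_subset_of_mem h

theorem OnlyArcInto.onlyArcInto_minOnlyArcInto (h : D.OnlyArcInto S c d) :
    D.OnlyArcInto (D.minOnlyArcInto c d) c d := by
  refine ⟨mem_sInter.2 fun T hT => hT.1, fun hc => h.2.1 (h.minOnlyArcInto_subset hc), ?_⟩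
  intro u w huw hu hw
  obtain ⟨T, hT, huT⟩ : ∃ T, D.OnlyArcInto T c d ∧ u ∉ T := by
    simpa [minOnlyArcInto] using hu
  exact hT.2.2 u w huw huT (mem_sInter.1 hw T hT)

theorem exists_onlyArcInto_of_not_strong_delArc (hv : D.verts = univ) (hnd : D.NoDigon)
    (hs : D.Strong) (hdel : ¬ (D.delArc c d).Strong) : ∃ S, D.OnlyArcInto S c d := by
  have hcd : ¬ ReflTransGen (D.delArc c d).Adj c d := by
    refine fun hcd => hdel ((strong_iff (D := D.delArc c d) hv
      fun u hu => hnd.irrefl u hu.1).2 fun u v => ?_)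
    refine reflTransGen_closed (fun a b hab => ?_) u v ((strong_iff hv hnd.irrefl).1 hs u v)
    by_cases h : a = c ∧ b = d
    · obtain ⟨rfl, rfl⟩ := h
      exact hcd
    · exact .single ⟨hab, h⟩
  refine ⟨{z | ¬ ReflTransGen (D.delArc c d).Adj c z}, hcd, fun h => h .refl, ?_⟩
  intro u w huw hu hw
  by_contra h
  exact hw ((not_not.1 hu).tail ⟨huw, h⟩)

theorem Strong.exists_arc_into (hv : D.verts = univ) (hs : D.Strong) (hS : S.Nonempty)
    (hSc : Sᶜ.Nonempty) : ∃ u w, D.Adj u w ∧ u ∉ S ∧ w ∈ S := by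
  obtain ⟨v, hvS⟩ := hS
  obtain ⟨u, huS⟩ := hSc
  obtain ⟨w, hw⟩ := hs u (hv ▸ trivial) v (hv ▸ trivial)
  exact (reflTransGen_of_dirWalk w hw).exists_rel_notMem_mem huS hvS

theorem Strong.onlyArcInto_of_forall (hv : D.verts = univ) (hs : D.Strong) (hS : S.Nonempty)
    (hSc : Sᶜ.Nonempty) (h : ∀ u w, D.Adj u w → u ∉ S → w ∈ S → u = c ∧ w = d) :
    D.OnlyArcInto S c d := by
  obtain ⟨u, w, huw, hu, hw⟩ := hs.exists_arc_into hv hS hSc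
  obtain ⟨rfl, rfl⟩ := h u w huw hu hw
  exact ⟨hw, hu, h⟩

theorem OnlyArcInto.union (hv : D.verts = univ) (hs : D.Strong) (hX : D.OnlyArcInto X c d)
    (hN : D.OnlyArcInto N x y) (hx : x ∈ X) (hXN : (X ∪ N)ᶜ.Nonempty) :
    D.OnlyArcInto (X ∪ N) c d := by
  refine hs.onlyArcInto_of_forall hv ⟨d, .inl hX.1⟩ hXN fun u w huw hu hw => ?_
  rw [mem_union, not_or] at hu
  rcases hw with hw | hw
  · exact hX.2.2 u w huw hu.1 hw
  · exact absurd ((hN.2.2 u w huw hu.2 hw).1 ▸ hx) hu.1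

theorem OnlyArcInto.inter (hv : D.verts = univ) (hs : D.Strong) (hX : D.OnlyArcInto X c d)
    (hN : D.OnlyArcInto N x y) (hy : y ∉ X) (hXN : (X ∩ N).Nonempty) :
    D.OnlyArcInto (X ∩ N) c d := by
  refine hs.onlyArcInto_of_forall hv hXN ⟨y, fun h => hy h.1⟩ fun u w huw hu hw => ?_
  by_cases huX : u ∈ X
  · exact absurd ((hN.2.2 u w huw (fun huN => hu ⟨huX, huN⟩) hw.2).2 ▸ hw.1) hy
  · exact hX.2.2 u w huw huX hw.1

theorem OnlyArcInto.existsUnique_arc (hS : D.OnlyArcInto S c d) (hcd : D.Adj c d) :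
    ∃! p : V × V, D.Adj p.1 p.2 ∧ p.1 ∈ Sᶜ ∧ p.2 ∈ S :=
  ⟨(c, d), ⟨hcd, hS.2.1, hS.1⟩, fun _ hp => Prod.ext_iff.2 (hS.2.2 _ _ hp.1 hp.2.1 hp.2.2)⟩

theorem exists_partition_of_onlyArcInto (hX : D.OnlyArcInto X c d)
    (hXc : D.OnlyArcInto Xᶜ x y) (hcd : D.Adj c d) (hxy : D.Adj x y) :
    ∃ A B : Set V, A ∪ B = univ ∧ Disjoint A B ∧ A.Nonempty ∧ B.Nonempty ∧
      (∃! p : V × V, D.Adj p.1 p.2 ∧ p.1 ∈ A ∧ p.2 ∈ B) ∧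
      (∃! p : V × V, D.Adj p.1 p.2 ∧ p.1 ∈ B ∧ p.2 ∈ A) :=
  ⟨X, Xᶜ, union_compl_self X, disjoint_compl_right, ⟨d, hX.1⟩, ⟨c, hX.2.1⟩,
    by simpa using hXc.existsUnique_arc hxy, hX.existsUnique_arc hcd⟩

theorem OnlyArcInto.exists_arc_out_of_cycle {v : V} {C : D.und.Walk v v} (hC : C.IsCycle)
    (hX : D.OnlyArcInto X c d) (hcdC : s(c, d) ∈ C.edges) :
    ∃ x y, D.Adj x y ∧ x ∈ X ∧ y ∉ X ∧ s(x, y) ∈ C.edges := by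
  obtain ⟨x, y, hxy, hx, hy, hxyC, hne⟩ := hC.exists_boundary_edge hcdC hX.1 hX.2.1
  refine ⟨x, y, hxy.2.resolve_right fun hyx => hne ?_, hx, hy, hxyC⟩
  obtain ⟨rfl, rfl⟩ := hX.2.2 y x hyx hy hx
  exact Sym2.eq_swap

theorem exists_partition_of_forall_not_strong_delArc [Finite V] (hv : D.verts = univ)
    (hnd : D.NoDigon) (hs : D.Strong) {v : V} {C : D.und.Walk v v} (hC : C.IsCycle)
    (hdel : ∀ a b, D.Adj a b → s(a, b) ∈ C.edges → ¬ (D.delArc a b).Strong) :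
    ∃ A B : Set V, A ∪ B = univ ∧ Disjoint A B ∧ A.Nonempty ∧ B.Nonempty ∧
      (∃! p : V × V, D.Adj p.1 p.2 ∧ p.1 ∈ A ∧ p.2 ∈ B) ∧
      (∃! p : V × V, D.Adj p.1 p.2 ∧ p.1 ∈ B ∧ p.2 ∈ A) := by
  set arcs := {p : V × V | D.Adj p.1 p.2 ∧ s(p.1, p.2) ∈ C.edges}
  have hcut : ∀ p ∈ arcs, ∃ S, D.OnlyArcInto S p.1 p.2 := fun p hp =>
    exists_onlyArcInto_of_not_strong_delArc hv hnd hs (hdel _ _ hp.1 hp.2)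
  have harcs : arcs.Nonempty := by
    obtain ⟨⟨a, b⟩, he⟩ := List.exists_mem_of_ne_nil _ (Walk.edges_eq_nil.not.2 hC.not_nil)
    rcases (C.adj_of_mem_edges he).2 with hab | hba
    · exact ⟨(a, b), hab, he⟩
    · exact ⟨(b, a), hba, Sym2.eq_swap ▸ he⟩
  obtain ⟨⟨c, d⟩, ⟨hcd, hcdC⟩, hmin⟩ := arcs.exists_max_image
    (fun p => (D.minOnlyArcInto p.1 p.2).ncard) (toFinite _) harcs
  obtain ⟨X, hX, hmax⟩ := {S | D.OnlyArcInto S c d}.exists_max_image ncard (toFinite _)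
    (hcut _ ⟨hcd, hcdC⟩)
  obtain ⟨x, y, hxy, hx, hy, hxyC⟩ := hX.exists_arc_out_of_cycle hC hcdC
  set N := D.minOnlyArcInto x y
  have hN : D.OnlyArcInto N x y :=
    (hcut (x, y) ⟨hxy, hxyC⟩).choose_spec.onlyArcInto_minOnlyArcInto
  have hunion : X ∪ N = univ := by
    by_contra hne
    have hlt : X.ncard < (X ∪ N).ncard :=
      ncard_lt_ncard (ssubset_union_left_iff.2 fun h => hy (h hN.1))
    exact (hmax _ (hX.union hv hs hN hx (nonempty_compl.2 hne))).not_gt hlt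
  have hinter : ¬ (X ∩ N).Nonempty := by
    intro hne
    have hsub : D.minOnlyArcInto c d ⊂ N :=
      ⟨(hX.inter hv hs hN hy hne).minOnlyArcInto_subset.trans inter_subset_right,
        fun h => hy (hX.minOnlyArcInto_subset (h hN.1))⟩
    exact (hmin (x, y) ⟨hxy, hxyC⟩).not_gt (ncard_lt_ncard hsub)
  have hNX : N = Xᶜ := by
    refine Subset.antisymm (fun z hzN hzX => hinter ⟨z, hzX, hzN⟩) fun z hzX => ?_
    exact (hunion ▸ mem_univ z : z ∈ X ∪ N).resolve_left hzX
  exact exists_partition_of_onlyArcInto hX (hNX ▸ hN) hcd hxy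

end Dgraph

/-- in a strong digraph, for every (not necessarily directed) cycle `C`,
either some edge of `C` can be deleted keeping the digraph strong, or there is a
partition `(A,B)` of the vertices with exactly one edge from `A` to `B` and exactly
one from `B` to `A`. -/
theorem stmt0 {V : Type*} [Fintype V] (G : Dgraph V) (hv : G.verts = Set.univ)
    (hnd : G.NoDigon) (hs : G.Strong)
    (v : V) (C : G.und.Walk v v) (hC : C.IsCycle) :
    (∃ a b, G.Adj a b ∧ s(a,b) ∈ C.edges ∧ (G.delArc a b).Strong) ∨
    (∃ A B : Set V, A ∪ B = Set.univ ∧ Disjoint A B ∧ A.Nonempty ∧ B.Nonempty ∧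
      (∃! p : V × V, G.Adj p.1 p.2 ∧ p.1 ∈ A ∧ p.2 ∈ B) ∧
      (∃! p : V × V, G.Adj p.1 p.2 ∧ p.1 ∈ B ∧ p.2 ∈ A)) :=
  or_iff_not_imp_left.2 fun hdel => Dgraph.exists_partition_of_forall_not_strong_delArc hv hnd hs
    hC fun a b hab he hstrong => hdel ⟨a, b, hab, he, hstrong⟩
end

section
/- Every 3-connected nonplanar graph other than K_5 contains a subdivision of K_{3,3} as a subgraph. -/
open SimpleGraph Set

variable {V W : Type*}

/-!
A nonplanar graph contains a subdivision of `K₅` or of `K₃,₃`; suppose it is one of `K₅`.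
If all its branch paths are single edges, some vertex lies outside it (as `G ≠ K₅`), and
3-connectivity yields a path through that vertex between two branch vertices avoiding the other
ones, which replaces their edge. So some branch path `P_ab` has an interior vertex. Since
`G - {a, b}` is connected, a path `Q` leaves `P_ab` at an interior vertex `x` and first meets the
rest of the subdivision at `y`. If `y` is a branch vertex `c`, then `{x, d, e}` and `{a, b, c}`
are the sides of a `K₃,₃`-subdivision; if `y` lies inside a path from `a` or `b` to `c`, follow
it on to `c` and conclude in the same way; if `y` lies inside a path `P_cd` with `c, d ∉ {a, b}`,
the sides are `{x, c, d}` and `{a, b, y}`. Each case is obtained by subdividing edges, deleting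
edges and adding an edge along a path of `G` meeting the subdivision only in branch vertices,
until the skeleton contains `K₃,₃` as a subgraph.
-/

namespace SimpleGraph.Walk

variable {G : SimpleGraph V}

theorem IsPath.eq_of_mem_takeUntil_of_mem_dropUntil [DecidableEq V] {u v x z : V}
    {p : G.Walk u v} (hp : p.IsPath) (hx : x ∈ p.support)
    (ht : z ∈ (p.takeUntil x hx).support) (hd : z ∈ (p.dropUntil x hx).support) : z = x := by
  have hnd := hp.support_nodup
  rw [← p.take_spec hx, support_append, List.nodup_append] at hnd
  rw [← cons_tail_support, List.mem_cons] at hd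
  exact hd.resolve_right fun hz => hnd.2.2 z ht z hz rfl

theorem IsPath.append {u v w : V} {p : G.Walk u v} {q : G.Walk v w} (hp : p.IsPath)
    (hq : q.IsPath) (hpq : ∀ z ∈ p.support, z ∈ q.support → z = v) : (p.append q).IsPath := by
  rw [isPath_def, support_append, List.nodup_append]
  have hq' := hq.support_nodup
  rw [← cons_tail_support, List.nodup_cons] at hq'
  refine ⟨hp.support_nodup, hq'.2, fun z hzp z' hzq hzz' => ?_⟩
  subst hzz'
  exact hq'.1 (hpq z hzp (List.mem_of_mem_tail hzq) ▸ hzq)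

theorem adj_of_support_subset {u v : V} (p : G.Walk u v) (huv : u ≠ v)
    (hp : ∀ z ∈ p.support, z = u ∨ z = v) : G.Adj u v := by
  cases p with
  | nil => exact absurd rfl huv
  | cons h q =>
    rcases hp _ (List.mem_cons_of_mem _ q.start_mem_support) with h' | h'
    · exact absurd h' h.ne.symm
    · exact h' ▸ h

theorem exists_isPath_first_mem (S : Set V) {u w : V} (p : G.Walk u w) (hp : p.IsPath)
    (hw : w ∈ S) : ∃ z ∈ S, ∃ q : G.Walk u z, q.IsPath ∧
      (∀ y ∈ q.support, y ∈ S → y = z) ∧ q.support ⊆ p.support := by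
  induction p with
  | nil => exact ⟨_, hw, nil, .nil, by simp, List.Subset.refl _⟩
  | @cons a b c hab p ih =>
    by_cases ha : a ∈ S
    · exact ⟨a, ha, nil, .nil, by simp, by simp⟩
    obtain ⟨hp', hap⟩ := (cons_isPath_iff hab p).mp hp
    obtain ⟨z, hz, q, hq, hqS, hqp⟩ := ih hp' hw
    refine ⟨z, hz, cons hab q, (cons_isPath_iff hab q).mpr ⟨hq, fun h => hap (hqp h)⟩, ?_, ?_⟩
    · simp only [support_cons, List.mem_cons, forall_eq_or_imp]
      exact ⟨fun h => absurd h ha, hqS⟩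
    · simpa using List.cons_subset_cons a hqp

end SimpleGraph.Walk

theorem SimpleGraph.Connected.exists_isPath_avoiding {G : SimpleGraph V} {s : Set V}
    (hconn : (G.induce sᶜ).Connected) {u v : V} (hu : u ∉ s) (hv : v ∉ s) :
    ∃ p : G.Walk u v, p.IsPath ∧ ∀ z ∈ p.support, z ∉ s := by
  obtain ⟨q, hq⟩ := (hconn.preconnected ⟨u, hu⟩ ⟨v, hv⟩).exists_isPath
  refine ⟨q.map ⟨Subtype.val, id⟩, hq.map Subtype.val_injective, ?_⟩
  intro z hz
  rw [Walk.support_map, List.mem_map] at hz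
  obtain ⟨z, -, rfl⟩ := hz
  exact z.2

namespace SubdivEmb

variable {U : Type*} {K : SimpleGraph U} {H : SimpleGraph W} {G : SimpleGraph V}
  (E : SubdivEmb H G)

theorem mem_support_walk_symm {a b : W} (h : H.Adj a b) {x : V} :
    x ∈ (E.walk h.symm).support ↔ x ∈ (E.walk h).support := by
  rw [E.symm, Walk.support_reverse, List.mem_reverse]

theorem exists_common_end_of_mem_inter {a b c d : W} (h₁ : H.Adj a b) (h₂ : H.Adj c d)
    (hne : s(a, b) ≠ s(c, d)) {x : V} (hx₁ : x ∈ (E.walk h₁).support)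
    (hx₂ : x ∈ (E.walk h₂).support) : ∃ w, (w = a ∨ w = b) ∧ (w = c ∨ w = d) ∧ E.f w = x := by
  obtain ⟨w, rfl⟩ := E.disjoint h₁ h₂ hne x hx₁ hx₂
  exact ⟨w, E.branch h₁ w hx₁, E.branch h₂ w hx₂, rfl⟩

def comp (φ : Copy K H) : SubdivEmb K G where
  f := E.f ∘ φ
  inj := E.inj.comp φ.injective
  walk _ _ h := E.walk (φ.toHom.map_adj h)
  isPath _ _ _ := E.isPath _
  symm _ _ _ := E.symm _
  branch a b h w hw := (E.branch _ (φ w) hw).imp (φ.injective ·) (φ.injective ·)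
  disjoint a b c d h₁ h₂ hne x hx₁ hx₂ := by
    have hne' : s(φ a, φ b) ≠ s(φ c, φ d) := by
      have hφ : Function.Injective φ := φ.injective
      simpa only [Ne, Sym2.eq_iff, hφ.eq_iff] using hne
    obtain ⟨w, hw, -, rfl⟩ := E.exists_common_end_of_mem_inter _ _ hne' hx₁ hx₂
    rcases hw with rfl | rfl
    exacts [⟨a, rfl⟩, ⟨b, rfl⟩]

end SubdivEmb

theorem ContainsSubdiv.trans_isContained {U : Type*} {K : SimpleGraph U} {H : SimpleGraph W}
    {G : SimpleGraph V} (hG : ContainsSubdiv G H) (hK : K ⊑ H) : ContainsSubdiv G K :=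
  let ⟨E⟩ := hG
  let ⟨φ⟩ := hK
  ⟨E.comp φ⟩

/-- `H` with the edge `ab` subdivided by a new vertex `none`. -/
def SimpleGraph.subdivideEdge (H : SimpleGraph W) (a b : W) : SimpleGraph (Option W) where
  Adj
    | some u, some v => H.Adj u v ∧ s(u, v) ≠ s(a, b)
    | none, some v | some v, none => v = a ∨ v = b
    | none, none => False
  symm := ⟨by
    rintro (_ | u) (_ | v) h
    exacts [h, h, h, ⟨h.1.symm, Sym2.eq_swap (a := u) ▸ h.2⟩]⟩
  loopless := ⟨by rintro (_ | u) h; exacts [h, h.1.ne rfl]⟩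

namespace SimpleGraph

variable {H : SimpleGraph W} {a b u v : W}

@[simp] theorem subdivideEdge_adj_some_some :
    (H.subdivideEdge a b).Adj (some u) (some v) ↔ H.Adj u v ∧ s(u, v) ≠ s(a, b) := Iff.rfl

@[simp] theorem subdivideEdge_adj_none_some :
    (H.subdivideEdge a b).Adj none (some v) ↔ v = a ∨ v = b := Iff.rfl

@[simp] theorem subdivideEdge_adj_some_none :
    (H.subdivideEdge a b).Adj (some u) none ↔ u = a ∨ u = b := Iff.rfl

end SimpleGraph

theorem SimpleGraph.adj_of_sup_edge_adj {H : SimpleGraph W} {p q u v : W}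
    (h : (H ⊔ edge p q).Adj u v) (hne : s(u, v) ≠ s(p, q)) : H.Adj u v :=
  h.resolve_right fun he => hne ((adj_edge _ _).mp he).1.symm

namespace SubdivEmb

variable {H : SimpleGraph W} {G : SimpleGraph V} (E : SubdivEmb H G)

section subdivideEdge

variable [DecidableEq V] [DecidableEq W] {a b : W} (hab : H.Adj a b) {x : V}
  (hx : x ∈ (E.walk hab).support)

def half (v : W) (hv : v = a ∨ v = b) : G.Walk x (E.f v) :=
  if h : v = a then ((E.walk hab).takeUntil x hx).reverse.copy rfl (by rw [h])
  else ((E.walk hab).dropUntil x hx).copy rfl (by rw [hv.resolve_left h])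

variable {E hab hx}

theorem isPath_half (v : W) (hv : v = a ∨ v = b) : (E.half hab hx v hv).IsPath := by
  unfold half
  split_ifs
  · exact (Walk.isPath_copy _ _ _).mpr ((E.isPath hab).takeUntil hx).reverse
  · exact (Walk.isPath_copy _ _ _).mpr ((E.isPath hab).dropUntil hx)

theorem mem_support_half {v : W} (hv : v = a ∨ v = b) {z : V} :
    z ∈ (E.half hab hx v hv).support ↔
      (v = a ∧ z ∈ ((E.walk hab).takeUntil x hx).support) ∨
        (v ≠ a ∧ z ∈ ((E.walk hab).dropUntil x hx).support) := by
  unfold half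
  split_ifs with h <;> simp [h]

theorem support_half_subset (v : W) (hv : v = a ∨ v = b) :
    (E.half hab hx v hv).support ⊆ (E.walk hab).support := by
  intro z hz
  rcases mem_support_half hv |>.mp hz with ⟨-, hz⟩ | ⟨-, hz⟩
  exacts [Walk.support_takeUntil_subset_support _ hx hz,
    Walk.support_dropUntil_subset_support _ hx hz]

theorem eq_of_mem_half_of_mem_half {v v' : W} (hv : v = a ∨ v = b) (hv' : v' = a ∨ v' = b)
    (hvv' : v ≠ v') {z : V} (hz : z ∈ (E.half hab hx v hv).support)
    (hz' : z ∈ (E.half hab hx v' hv').support) : z = x := by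
  have hP := E.isPath hab
  rw [mem_support_half] at hz hz'
  rcases hz with ⟨rfl, hz⟩ | ⟨hva, hz⟩ <;> rcases hz' with ⟨rfl, hz'⟩ | ⟨hv'a, hz'⟩
  · exact absurd rfl hvv'
  · exact hP.eq_of_mem_takeUntil_of_mem_dropUntil hx hz hz'
  · exact hP.eq_of_mem_takeUntil_of_mem_dropUntil hx hz' hz
  · exact absurd ((hv.resolve_left hva).trans (hv'.resolve_left hv'a).symm) hvv'

theorem eq_of_f_mem_support_half (hxf : x ∉ range E.f) {v : W} (hv : v = a ∨ v = b) {w : W}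
    (hw : E.f w ∈ (E.half hab hx v hv).support) : w = v := by
  have hw' : w = a ∨ w = b := E.branch hab w (support_half_subset v hv hw)
  by_contra hwv
  exact hxf ⟨w, eq_of_mem_half_of_mem_half hw' hv hwv (Walk.end_mem_support _) hw⟩

variable (E hab hx) in
def subdivideWalk : ∀ ⦃u v : Option W⦄, (H.subdivideEdge a b).Adj u v →
    G.Walk (u.elim x E.f) (v.elim x E.f)
  | some _, some _, h => E.walk h.1
  | none, some v, h => E.half hab hx v h
  | some u, none, h => (E.half hab hx u h).reverse

theorem mem_support_subdivideWalk {u v : Option W} (h : (H.subdivideEdge a b).Adj u v) {z : V}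
    (hz : z ∈ (E.subdivideWalk hab hx h).support) :
    (∃ (u' v' : W) (h' : H.Adj u' v'), s(u, v) = s(some u', some v') ∧ s(u', v') ≠ s(a, b) ∧
        z ∈ (E.walk h').support) ∨
      ∃ (v₀ : W) (hv₀ : v₀ = a ∨ v₀ = b), s(u, v) = s(none, some v₀) ∧
        z ∈ (E.half hab hx v₀ hv₀).support := by
  rcases u with _ | u <;> rcases v with _ | v
  · exact h.elim
  · exact Or.inr ⟨v, h, rfl, hz⟩
  · refine Or.inr ⟨u, h, Sym2.eq_swap, ?_⟩
    change z ∈ (E.half hab hx u h).reverse.support at hz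
    rwa [Walk.support_reverse, List.mem_reverse] at hz
  · exact Or.inl ⟨u, v, h.1, rfl, h.2, hz⟩

theorem exists_mem_support_of_mem_subdivideWalk {u v : Option W}
    (h : (H.subdivideEdge a b).Adj u v) {z : V} (hz : z ∈ (E.subdivideWalk hab hx h).support) :
    ∃ (u' v' : W) (h' : H.Adj u' v'), z ∈ (E.walk h').support := by
  rcases mem_support_subdivideWalk h hz with ⟨u', v', h', -, -, hz⟩ | ⟨v₀, hv₀, -, hz⟩
  exacts [⟨u', v', h', hz⟩, ⟨a, b, hab, support_half_subset v₀ hv₀ hz⟩]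

variable (E hab hx) in
def subdivideEdge (hxf : x ∉ range E.f) : SubdivEmb (H.subdivideEdge a b) G where
  f o := o.elim x E.f
  inj := by
    rintro (_ | u) (_ | v) h
    · rfl
    · exact absurd ⟨v, h.symm⟩ hxf
    · exact absurd ⟨u, h⟩ hxf
    · exact congrArg some (E.inj h)
  walk := E.subdivideWalk hab hx
  isPath u v h := match u, v, h with
    | some _, some _, h => E.isPath h.1
    | none, some v, h => isPath_half v h
    | some u, none, h => (isPath_half u h).reverse
  symm u v h := match u, v, h with
    | some _, some _, h => E.symm h.1
    | none, some _, _ => rfl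
    | some _, none, _ => (Walk.reverse_reverse _).symm
  branch u v h w hw := by
    rcases u with _ | u <;> rcases v with _ | v <;> rcases w with _ | w
    any_goals exact h.elim
    · exact Or.inl rfl
    · exact Or.inr (congrArg some (eq_of_f_mem_support_half hxf h hw))
    · exact Or.inr rfl
    · change E.f w ∈ (E.half hab hx u h).reverse.support at hw
      rw [Walk.support_reverse, List.mem_reverse] at hw
      exact Or.inl (congrArg some (eq_of_f_mem_support_half hxf h hw))
    · obtain ⟨w, -, -, rfl⟩ := E.exists_common_end_of_mem_inter h.1 hab h.2 hw hx
      exact absurd ⟨w, rfl⟩ hxf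
    · exact (E.branch h.1 w hw).imp (congrArg some) (congrArg some)
  disjoint u v u' v' h h' hne z hz hz' := by
    rcases mem_support_subdivideWalk h hz with
      ⟨u₁, v₁, h₁, e₁, hab₁, hz₁⟩ | ⟨v₁, hv₁, e₁, hz₁⟩ <;>
    rcases mem_support_subdivideWalk h' hz' with
      ⟨u₂, v₂, h₂, e₂, hab₂, hz₂⟩ | ⟨v₂, hv₂, e₂, hz₂⟩ <;>
    rw [e₁, e₂] at hne
    · have hne' : s(u₁, v₁) ≠ s(u₂, v₂) := by
        rintro e
        rw [Sym2.eq_iff] at e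
        rcases e with ⟨rfl, rfl⟩ | ⟨rfl, rfl⟩
        exacts [hne rfl, hne Sym2.eq_swap]
      obtain ⟨w, -, -, rfl⟩ := E.exists_common_end_of_mem_inter h₁ h₂ hne' hz₁ hz₂
      exact ⟨some w, rfl⟩
    · obtain ⟨w, -, -, rfl⟩ :=
        E.exists_common_end_of_mem_inter h₁ hab hab₁ hz₁ (support_half_subset v₂ hv₂ hz₂)
      exact ⟨some w, rfl⟩
    · obtain ⟨w, -, -, rfl⟩ :=
        E.exists_common_end_of_mem_inter h₂ hab hab₂ hz₂ (support_half_subset v₁ hv₁ hz₁)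
      exact ⟨some w, rfl⟩
    · have hvv' : v₁ ≠ v₂ := by rintro rfl; exact hne rfl
      exact ⟨none, (eq_of_mem_half_of_mem_half hv₁ hv₂ hvv' hz₁ hz₂).symm⟩

end subdivideEdge

section supEdge

variable {E} [DecidableEq W] {p q : W} (R : G.Walk (E.f p) (E.f q))

variable (E) in
def supEdgeWalk ⦃u v : W⦄ (h : (H ⊔ edge p q).Adj u v) : G.Walk (E.f u) (E.f v) :=
  if h₁ : u = p ∧ v = q then R.copy (by rw [h₁.1]) (by rw [h₁.2])
  else if h₂ : u = q ∧ v = p then R.reverse.copy (by rw [h₂.1]) (by rw [h₂.2])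
  else E.walk (SimpleGraph.adj_of_sup_edge_adj h fun e => by rw [Sym2.eq_iff] at e; tauto)

theorem supEdgeWalk_self (h : (H ⊔ edge p q).Adj p q) : E.supEdgeWalk R h = R := by
  simp [supEdgeWalk]

theorem supEdgeWalk_swap (hpq : p ≠ q) (h : (H ⊔ edge p q).Adj q p) :
    E.supEdgeWalk R h = R.reverse := by
  simp [supEdgeWalk, hpq.symm]

theorem supEdgeWalk_of_ne {u v : W} (h : (H ⊔ edge p q).Adj u v) (hne : s(u, v) ≠ s(p, q)) :
    E.supEdgeWalk R h = E.walk (SimpleGraph.adj_of_sup_edge_adj h hne) := by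
  rw [supEdgeWalk, dif_neg, dif_neg]
  · rintro ⟨rfl, rfl⟩; exact hne Sym2.eq_swap
  · rintro ⟨rfl, rfl⟩; exact hne rfl

theorem mem_support_supEdgeWalk {u v : W} (h : (H ⊔ edge p q).Adj u v) {z : V}
    (hz : z ∈ (E.supEdgeWalk R h).support) :
    (s(u, v) = s(p, q) ∧ z ∈ R.support) ∨
      ∃ h' : H.Adj u v, s(u, v) ≠ s(p, q) ∧ z ∈ (E.walk h').support := by
  by_cases hne : s(u, v) = s(p, q)
  · refine Or.inl ⟨hne, ?_⟩
    rw [Sym2.eq_iff] at hne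
    unfold supEdgeWalk at hz
    split_ifs at hz <;> simp_all
  · rw [supEdgeWalk_of_ne R h hne] at hz
    exact Or.inr ⟨_, hne, hz⟩

variable (E) in
/-- If `pq` is already an edge of `H`, its path is replaced by `R`. -/
def supEdge (hpq : p ≠ q) (hR : R.IsPath) (hRf : ∀ w, E.f w ∈ R.support → w = p ∨ w = q)
    (hRE : ∀ ⦃u v : W⦄ (h : H.Adj u v), s(u, v) ≠ s(p, q) →
      ∀ z ∈ R.support, z ∈ (E.walk h).support → z ∈ range E.f) :
    SubdivEmb (H ⊔ edge p q) G where
  f := E.f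
  inj := E.inj
  walk := E.supEdgeWalk R
  isPath u v h := by
    unfold supEdgeWalk
    split_ifs
    · exact (Walk.isPath_copy _ _ _).mpr hR
    · exact (Walk.isPath_copy _ _ _).mpr hR.reverse
    · exact E.isPath _
  symm u v h := by
    by_cases hne : s(u, v) = s(p, q)
    · rw [Sym2.eq_iff] at hne
      rcases hne with ⟨rfl, rfl⟩ | ⟨rfl, rfl⟩
      · rw [supEdgeWalk_self, supEdgeWalk_swap R hpq]
      · rw [supEdgeWalk_self, supEdgeWalk_swap R hpq, Walk.reverse_reverse]
    · rw [supEdgeWalk_of_ne R h hne, supEdgeWalk_of_ne R h.symm (by rwa [Sym2.eq_swap]), E.symm]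
  branch u v h w hw := by
    rcases mem_support_supEdgeWalk R h hw with ⟨e, hw⟩ | ⟨h', -, hw⟩
    · simpa only [← Sym2.mem_iff, e] using hRf w hw
    · exact E.branch h' w hw
  disjoint u v u' v' h h' hne z hz hz' := by
    rcases mem_support_supEdgeWalk R h hz with ⟨e, hz⟩ | ⟨h, e, hz⟩ <;>
    rcases mem_support_supEdgeWalk R h' hz' with ⟨e', hz'⟩ | ⟨h', e', hz'⟩
    · exact absurd (e.trans e'.symm) hne
    · exact hRE h' e' z hz hz'
    · exact hRE h e z hz' hz
    · exact E.disjoint h h' hne z hz hz'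

theorem supEdge_walk_self {hpq : p ≠ q} {hR : R.IsPath} {hRf} {hRE}
    (h : (H ⊔ edge p q).Adj p q) : (E.supEdge R hpq hR hRf hRE).walk h = R :=
  supEdgeWalk_self R h

end supEdge

end SubdivEmb

theorem SimpleGraph.nonempty_iso_completeGraph_of_bijective {G : SimpleGraph V} {f : W → V}
    (hf : Function.Bijective f) (hadj : ∀ ⦃a b⦄, a ≠ b → G.Adj (f a) (f b)) :
    Nonempty (G ≃g completeGraph W) := by
  refine ⟨⟨(Equiv.ofBijective f hf).symm, fun {u v} => ?_⟩⟩
  obtain ⟨a, rfl⟩ := hf.2 u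
  obtain ⟨b, rfl⟩ := hf.2 v
  rw [Equiv.ofBijective_symm_apply_apply, Equiv.ofBijective_symm_apply_apply]
  exact ⟨fun h => hadj h, fun h e => h.ne (congrArg f e)⟩

section Hall

local notation "K₅" => completeGraph (Fin 5)
local notation "K₃₃" => completeBipartiteGraph (Fin 3) (Fin 3)

theorem Fin.exists_nodup_extend_three (a b c : Fin 5) (hab : a ≠ b) (hac : a ≠ c) (hbc : b ≠ c) :
    ∃ d e : Fin 5, [a, b, c, d, e].Nodup := by
  revert a b c; decide

theorem K33_isContained_subdivideEdge_sup_edge {a b o : Fin 5} (hab : a ≠ b) (hao : a ≠ o)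
    (hbo : b ≠ o) :
    K₃₃ ⊑ ((K₅).subdivideEdge a b).deleteEdges {s(some a, some o), s(some b, some o)} ⊔
      edge none (some o) := by
  obtain ⟨d, e, hn⟩ := Fin.exists_nodup_extend_three a b o hab hao hbo
  simp only [List.nodup_cons, List.mem_cons, List.not_mem_nil, or_false, not_or] at hn
  obtain ⟨⟨-, -, had, hae⟩, ⟨-, hbd, hbe⟩, ⟨hod, hoe⟩, hde, -⟩ := hn
  refine ⟨⟨⟨Sum.elim ![none, some d, some e] ![some a, some b, some o], ?_⟩, ?_⟩⟩
  · rintro (i | i) (j | j) h <;> simp at h <;> fin_cases i <;> fin_cases j <;>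
      simp [edge_adj] <;> grind
  · rintro (i | i) (j | j) h <;> fin_cases i <;> fin_cases j <;> simp at h ⊢ <;> grind

theorem K33_isContained_subdivideEdge_subdivideEdge_sup_edge {a b c d : Fin 5} (hab : a ≠ b)
    (hcd : c ≠ d) (hac : a ≠ c) (had : a ≠ d) (hbc : b ≠ c) (hbd : b ≠ d) :
    K₃₃ ⊑ (((K₅).subdivideEdge a b).subdivideEdge (some c) (some d)) ⊔ edge (some none) none := by
  refine ⟨⟨⟨Sum.elim ![some none, some (some c), some (some d)]
    ![some (some a), some (some b), none], ?_⟩, ?_⟩⟩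
  · rintro (i | i) (j | j) h <;> simp at h <;> fin_cases i <;> fin_cases j <;>
      simp [edge_adj] <;> grind
  · rintro (i | i) (j | j) h <;> fin_cases i <;> fin_cases j <;> simp at h ⊢ <;> grind

variable {G : SimpleGraph V}

theorem containsSubdiv_K33_of_path_to_branch [DecidableEq V] (E : SubdivEmb K₅ G)
    {a b o : Fin 5} (hab : (K₅).Adj a b) (hao : a ≠ o) (hbo : b ≠ o) {x : V}
    (hx : x ∈ (E.walk hab).support) (hxf : x ∉ range E.f)
    (R : G.Walk x (E.f o)) (hR : R.IsPath) (hRf : ∀ w, E.f w ∈ R.support → w = o)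
    (hRE : ∀ z ∈ R.support, ∀ ⦃u v⦄ (h : (K₅).Adj u v), z ∈ (E.walk h).support →
      z = x ∨ z = E.f o ∨ s(u, v) = s(a, o) ∨ s(u, v) = s(b, o)) :
    ContainsSubdiv G K₃₃ := by
  let F := (E.subdivideEdge hab hx hxf).comp (Copy.ofLE _ _ (deleteEdges_le
    {s(some a, some o), s(some b, some o)}))
  refine ContainsSubdiv.trans_isContained ⟨F.supEdge (p := none) (q := some o) R
    (by simp) hR ?_ ?_⟩ (K33_isContained_subdivideEdge_sup_edge hab.ne hao hbo)
  · rintro (_ | w) hw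
    exacts [Or.inl rfl, Or.inr (congrArg some (hRf w hw))]
  · intro u v h _ z hz hz'
    rcases SubdivEmb.mem_support_subdivideWalk _ hz' with
      ⟨u', v', h', e, -, hz''⟩ | ⟨v₀, hv₀, -, hz''⟩
    · rcases hRE z hz h' hz'' with rfl | rfl | e' | e'
      · exact ⟨none, rfl⟩
      · exact ⟨some o, rfl⟩
      all_goals
        refine absurd ?_ (deleteEdges_adj.mp h).2
        change s(u, v) = s(some u', some v') at e
        rw [Sym2.eq_iff] at e'
        rcases e' with ⟨rfl, rfl⟩ | ⟨rfl, rfl⟩ <;> simp [e, Sym2.eq_swap]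
    · rcases hRE z hz hab (SubdivEmb.support_half_subset v₀ hv₀ hz'') with rfl | rfl | e' | e'
      · exact ⟨none, rfl⟩
      · exact ⟨some o, rfl⟩
      all_goals rw [Sym2.eq_iff] at e'; grind

theorem containsSubdiv_K33_of_path_between_walks [DecidableEq V] (E : SubdivEmb K₅ G)
    {a b c d : Fin 5} (hab : (K₅).Adj a b) (hcd : (K₅).Adj c d) (hac : a ≠ c) (had : a ≠ d)
    (hbc : b ≠ c) (hbd : b ≠ d) {x y : V} (hx : x ∈ (E.walk hab).support) (hxf : x ∉ range E.f)
    (hy : y ∈ (E.walk hcd).support) (hyf : y ∉ range E.f)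
    (Q : G.Walk x y) (hQ : Q.IsPath) (hQf : ∀ w, E.f w ∉ Q.support)
    (hQE : ∀ z ∈ Q.support, ∀ ⦃u v⦄ (h : (K₅).Adj u v), z ∈ (E.walk h).support → z = x ∨ z = y) :
    ContainsSubdiv G K₃₃ := by
  let F := E.subdivideEdge hab hx hxf
  have hcd' : ((K₅).subdivideEdge a b).Adj (some c) (some d) :=
    ⟨hcd, fun e => by rw [Sym2.eq_iff] at e; grind⟩
  have hyf' : y ∉ range F.f := by
    rintro ⟨_ | w, rfl⟩
    · obtain ⟨w, -, -, rfl⟩ := E.exists_common_end_of_mem_inter hab hcd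
        (fun e => by rw [Sym2.eq_iff] at e; grind) hx hy
      exact hxf ⟨w, rfl⟩
    · exact hyf ⟨w, rfl⟩
  let F₂ := F.subdivideEdge hcd' hy hyf'
  refine ContainsSubdiv.trans_isContained ⟨F₂.supEdge (p := some none) (q := none) Q
    (by simp) hQ ?_ ?_⟩
    (K33_isContained_subdivideEdge_subdivideEdge_sup_edge hab.ne hcd.ne hac had hbc hbd)
  · rintro (_ | _ | w) hw
    exacts [Or.inr rfl, Or.inl rfl, absurd hw (hQf w)]
  · intro u v h _ z hz hz'
    obtain ⟨u', v', h', hz'⟩ := SubdivEmb.exists_mem_support_of_mem_subdivideWalk h hz'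
    obtain ⟨u'', v'', h'', hz''⟩ := SubdivEmb.exists_mem_support_of_mem_subdivideWalk h' hz'
    rcases hQE z hz h'' hz'' with rfl | rfl
    exacts [⟨some none, rfl⟩, ⟨none, rfl⟩]

theorem containsSubdiv_K33_of_path_to_adjacent_walk [DecidableEq V] (E : SubdivEmb K₅ G)
    {a b s o : Fin 5} (hab : (K₅).Adj a b) (hso : (K₅).Adj s o) (hs : s = a ∨ s = b)
    (hao : a ≠ o) (hbo : b ≠ o) {x y : V} (hx : x ∈ (E.walk hab).support) (hxf : x ∉ range E.f)
    (hy : y ∈ (E.walk hso).support) (hyf : y ∉ range E.f)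
    (Q : G.Walk x y) (hQ : Q.IsPath) (hQf : ∀ w, E.f w ∉ Q.support)
    (hQE : ∀ z ∈ Q.support, ∀ ⦃u v⦄ (h : (K₅).Adj u v), z ∈ (E.walk h).support → z = x ∨ z = y) :
    ContainsSubdiv G K₃₃ := by
  have hne : s(s, o) ≠ s(a, b) := fun e => by rw [Sym2.eq_iff] at e; grind
  have hsD : E.f s ∉ ((E.walk hso).dropUntil y hy).support := fun h =>
    hyf ⟨s, ((E.isPath hso).eq_of_mem_takeUntil_of_mem_dropUntil hy (Walk.start_mem_support _) h)⟩
  have hD : ∀ z ∈ ((E.walk hso).dropUntil y hy).support, ∀ ⦃u v⦄ (h : (K₅).Adj u v),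
      z ∈ (E.walk h).support → z = E.f o ∨ s(u, v) = s(s, o) := by
    intro z hz u v h hz'
    refine or_iff_not_imp_right.mpr fun huv => ?_
    obtain ⟨w, -, hw, rfl⟩ := E.exists_common_end_of_mem_inter h hso huv hz'
      (Walk.support_dropUntil_subset_support _ hy hz)
    rcases hw with rfl | rfl
    exacts [absurd hz hsD, rfl]
  refine containsSubdiv_K33_of_path_to_branch E hab hao hbo hx hxf
    (Q.append ((E.walk hso).dropUntil y hy)) (hQ.append ((E.isPath hso).dropUntil hy) ?_) ?_ ?_
  · intro z hzQ hzD
    refine (hQE z hzQ hso (Walk.support_dropUntil_subset_support _ hy hzD)).resolve_left ?_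
    rintro rfl
    obtain ⟨w, -, -, rfl⟩ := E.exists_common_end_of_mem_inter hso hab hne
      (Walk.support_dropUntil_subset_support _ hy hzD) hx
    exact hxf ⟨w, rfl⟩
  · intro w hw
    rcases (Walk.mem_support_append_iff _ _).mp hw with hw | hw
    · exact absurd hw (hQf w)
    · rcases E.branch hso w (Walk.support_dropUntil_subset_support _ hy hw) with rfl | rfl
      exacts [absurd hw hsD, rfl]
  · intro z hz u v h hz'
    have key : s(u, v) = s(s, o) → s(u, v) = s(a, o) ∨ s(u, v) = s(b, o) := by
      rcases hs with rfl | rfl <;> simp +contextual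
    rcases (Walk.mem_support_append_iff _ _).mp hz with hz | hz
    · rcases hQE z hz h hz' with rfl | rfl
      · exact Or.inl rfl
      · by_cases huv : s(u, v) = s(s, o)
        · exact Or.inr (Or.inr (key huv))
        · obtain ⟨w, -, -, rfl⟩ := E.exists_common_end_of_mem_inter h hso huv hz' hy
          exact absurd ⟨w, rfl⟩ hyf
    · rcases hD z hz h hz' with rfl | huv
      exacts [Or.inr (Or.inl rfl), Or.inr (Or.inr (key huv))]

theorem exists_bridge_of_mem_walk [DecidableEq V] (h3 : KConnected 3 G) (E : SubdivEmb K₅ G)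
    {a b : Fin 5} (hab : (K₅).Adj a b) {x : V} (hx : x ∈ (E.walk hab).support)
    (hxf : x ∉ range E.f) :
    ∃ x' ∈ (E.walk hab).support, x' ∉ range E.f ∧
      ∃ (u v : Fin 5) (huv : (K₅).Adj u v), s(u, v) ≠ s(a, b) ∧
        ∃ y ∈ (E.walk huv).support, ∃ Q : G.Walk x' y, Q.IsPath ∧
          (∀ w, E.f w ∈ Q.support → E.f w = y ∧ w ≠ a ∧ w ≠ b) ∧
          ∀ z ∈ Q.support, ∀ ⦃u v⦄ (h : (K₅).Adj u v), z ∈ (E.walk h).support →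
            z = x' ∨ z = y := by
  obtain ⟨c, hca, hcb⟩ := (by decide : ∀ a b : Fin 5, ∃ c, c ≠ a ∧ c ≠ b) a b
  have hs : ({E.f a, E.f b} : Set V).ncard < 3 := by
    rw [Set.ncard_pair (E.inj.ne hab.ne)]; norm_num
  have hxab : x ∉ ({E.f a, E.f b} : Set V) := by
    rintro (h | h) <;> exact hxf ⟨_, h.symm⟩
  have hcab : E.f c ∉ ({E.f a, E.f b} : Set V) := by
    rintro (h | h)
    exacts [hca (E.inj h), hcb (E.inj h)]
  obtain ⟨W₀, hW₀, hW₀ab⟩ := (h3.2 _ hs).exists_isPath_avoiding hxab hcab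
  -- `y`: the first vertex of `W₀` on another branch path; `x'`: the last one of `P_ab` before it
  let T := {z | ∃ (u v : Fin 5) (h : (K₅).Adj u v), s(u, v) ≠ s(a, b) ∧ z ∈ (E.walk h).support}
  have hcT : E.f c ∈ T := ⟨c, a, hca, fun e => by rw [Sym2.eq_iff] at e; grind,
    Walk.start_mem_support _⟩
  obtain ⟨y, ⟨u, v, huv, hne, hy⟩, W₁, hW₁, hW₁T, hW₁W₀⟩ := W₀.exists_isPath_first_mem T hW₀ hcT
  obtain ⟨x', hx', W₂, hW₂, hW₂P, hW₂W₁⟩ :=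
    W₁.reverse.exists_isPath_first_mem {z | z ∈ (E.walk hab).support} hW₁.reverse hx
  have hQW₁ : ∀ z ∈ W₂.reverse.support, z ∈ W₁.support := fun z hz => by
    simpa using hW₂W₁ (by simpa using hz)
  have hQab : ∀ z ∈ W₂.reverse.support, z ≠ E.f a ∧ z ≠ E.f b := fun z hz => by
    simpa using hW₀ab z (hW₁W₀ (hQW₁ z hz))
  have hx'f : x' ∉ range E.f := by
    rintro ⟨w, rfl⟩
    have := hQab _ (Walk.start_mem_support _)
    rcases E.branch hab w hx' with rfl | rfl <;> simp at this
  refine ⟨x', hx', hx'f, u, v, huv, hne, y, hy, W₂.reverse, hW₂.reverse, ?_, ?_⟩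
  · intro w hw
    obtain ⟨hwa, hwb⟩ := hQab _ hw
    have hwa' : w ≠ a := fun h => hwa (h ▸ rfl)
    have hwb' : w ≠ b := fun h => hwb (h ▸ rfl)
    refine ⟨hW₁T _ (hQW₁ _ hw) ⟨w, a, hwa', fun e => ?_, Walk.start_mem_support _⟩, hwa', hwb'⟩
    rw [Sym2.eq_iff] at e; grind
  · intro z hz u v h hz'
    by_cases e : s(u, v) = s(a, b)
    · refine Or.inl (hW₂P z (by simpa using hz) ?_)
      rw [Sym2.eq_iff] at e
      rcases e with ⟨rfl, rfl⟩ | ⟨rfl, rfl⟩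
      exacts [hz', (E.mem_support_walk_symm h).mpr hz']
    · exact Or.inr (hW₁T z (hQW₁ z hz) ⟨u, v, h, e, hz'⟩)

theorem containsSubdiv_K33_of_mem_walk (h3 : KConnected 3 G) (E : SubdivEmb K₅ G) {a b : Fin 5}
    (hab : (K₅).Adj a b) {x : V} (hx : x ∈ (E.walk hab).support) (hxf : x ∉ range E.f) :
    ContainsSubdiv G K₃₃ := by
  classical
  obtain ⟨x', hx', hx'f, u, v, huv, hne, y, hy, Q, hQ, hQf, hQE⟩ :=
    exists_bridge_of_mem_walk h3 E hab hx hxf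
  by_cases hyf : y ∈ range E.f
  · obtain ⟨o, rfl⟩ := hyf
    obtain ⟨-, hoa, hob⟩ := hQf o (Walk.end_mem_support _)
    refine containsSubdiv_K33_of_path_to_branch E hab (Ne.symm hoa) (Ne.symm hob) hx' hx'f Q hQ
      (fun w hw => E.inj (hQf w hw).1) fun z hz u v h hz' => ?_
    rcases hQE z hz h hz' with rfl | rfl
    exacts [Or.inl rfl, Or.inr (Or.inl rfl)]
  have hQf' : ∀ w, E.f w ∉ Q.support := fun w hw => hyf ⟨w, (hQf w hw).1⟩
  have hab' := hab.ne
  have huv' := huv.ne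
  rw [Ne, Sym2.eq_iff] at hne
  by_cases hu : u = a ∨ u = b
  · have hv : v ≠ a ∧ v ≠ b := by grind
    exact containsSubdiv_K33_of_path_to_adjacent_walk E hab huv hu (Ne.symm hv.1) (Ne.symm hv.2)
      hx' hx'f hy hyf Q hQ hQf' hQE
  by_cases hv : v = a ∨ v = b
  · exact containsSubdiv_K33_of_path_to_adjacent_walk E hab huv.symm hv (by grind) (by grind)
      hx' hx'f ((E.mem_support_walk_symm huv).mpr hy) hyf Q hQ hQf' hQE
  · exact containsSubdiv_K33_of_path_between_walks E hab huv (by grind) (by grind) (by grind)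
      (by grind) hx' hx'f hy hyf Q hQ hQf' hQE

theorem exists_subdivEmb_K5_mem_walk (h3 : KConnected 3 G) (hK5 : IsEmpty (G ≃g K₅))
    (E : SubdivEmb K₅ G) : ∃ (E' : SubdivEmb K₅ G) (a b : Fin 5) (hab : (K₅).Adj a b) (x : V),
      x ∈ (E'.walk hab).support ∧ x ∉ range E'.f := by
  classical
  by_cases hE : ∃ (a b : Fin 5) (hab : (K₅).Adj a b) (x : V),
      x ∈ (E.walk hab).support ∧ x ∉ range E.f
  · exact ⟨E, hE⟩
  push Not at hE
  have hadj : ∀ ⦃a b⦄, (K₅).Adj a b → G.Adj (E.f a) (E.f b) := fun a b h =>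
    (E.walk h).adj_of_support_subset (E.inj.ne h.ne) fun z hz => by
      obtain ⟨w, rfl⟩ := hE a b h z hz
      rcases E.branch h w hz with rfl | rfl
      exacts [Or.inl rfl, Or.inr rfl]
  obtain ⟨v, hv⟩ : ∃ v, v ∉ range E.f := by
    by_contra! hsurj
    exact hK5.false (nonempty_iso_completeGraph_of_bijective ⟨E.inj, hsurj⟩ hadj).some
  obtain ⟨W, -, -⟩ := (h3.2 ∅ (by simp)).exists_isPath_avoiding (u := E.f 0) (v := v)
    (Set.notMem_empty _) (Set.notMem_empty _)
  obtain ⟨d, -, ⟨a, ha⟩, hu⟩ := W.exists_boundary_dart (range E.f) ⟨0, rfl⟩ hv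
  obtain ⟨c, hca⟩ := (by decide : ∀ a : Fin 5, ∃ c, c ≠ a) a
  obtain ⟨W', hW', hW'a⟩ := (h3.2 {E.f a} (by simp)).exists_isPath_avoiding (u := d.snd)
    (v := E.f c) (fun h => hu ⟨a, h.symm⟩) (E.inj.ne hca)
  obtain ⟨_, ⟨b, rfl⟩, Q, hQ, hQf, hQW'⟩ := W'.exists_isPath_first_mem (range E.f) hW' ⟨c, rfl⟩
  have hQa : E.f a ∉ Q.support := fun h => hW'a _ (hQW' h) rfl
  have hab : a ≠ b := by rintro rfl; exact hQa (Walk.end_mem_support _)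
  let R : G.Walk (E.f a) (E.f b) := Walk.cons (ha ▸ d.adj) Q
  have hR : R.IsPath := (Walk.cons_isPath_iff _ _).mpr ⟨hQ, hQa⟩
  have hRf : ∀ w, E.f w ∈ R.support → w = a ∨ w = b := by
    intro w hw
    rcases List.mem_cons.mp hw with h | h
    exacts [Or.inl (E.inj h), Or.inr (E.inj (hQf _ h ⟨w, rfl⟩))]
  let F := E.supEdge R hab hR hRf fun u v h _ z _ hz => hE u v h z hz
  refine ⟨F.comp (Copy.ofLE _ _ le_sup_left), a, b, hab, d.snd, ?_, fun ⟨w, hw⟩ => hu ⟨w, hw⟩⟩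
  change d.snd ∈ (F.walk (Or.inl hab)).support
  rw [SubdivEmb.supEdge_walk_self]
  exact List.mem_cons_of_mem _ (Walk.start_mem_support _)

end Hall

theorem stmt9_general {V : Type*} (G : SimpleGraph V) (h3 : KConnected 3 G)
    (hnp : ¬ Planar G) (hK5 : IsEmpty (G ≃g completeGraph (Fin 5))) :
    ContainsSubdiv G (completeBipartiteGraph (Fin 3) (Fin 3)) := by
  by_contra hK33
  obtain ⟨E⟩ : ContainsSubdiv G (completeGraph (Fin 5)) := by
    by_contra hK5'
    exact hnp ⟨hK5', hK33⟩
  obtain ⟨E', a, b, hab, x, hx, hxf⟩ := exists_subdivEmb_K5_mem_walk h3 hK5 E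
  exact hK33 (containsSubdiv_K33_of_mem_walk h3 E' hab hx hxf)

/-- Hall's theorem: every 3-connected nonplanar graph other than `K₅`
contains a subdivision of `K_{3,3}`. -/
theorem stmt9 {V : Type*} [Fintype V] (G : SimpleGraph V) (h3 : KConnected 3 G)
    (hnp : ¬ Planar G) (hK5 : IsEmpty (G ≃g completeGraph (Fin 5))) :
    ContainsSubdiv G (completeBipartiteGraph (Fin 3) (Fin 3)) :=
  stmt9_general G h3 hnp hK5
end

section
/- Let G be a 2-connected graph with a spanning tree T. Then there are at most two orientations of G in which every fundamental cycle of T becomes a directed cycle, and these two orientations are reverses of each other. -/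
open SimpleGraph Set

variable {V W : Type*}

/-! Call an edge agreeing when `O₁` and `O₂` orient it the same way. Both orientations make
every fundamental cycle directed, so the edges of one fundamental cycle are either all agreeing
or all disagreeing. Fix a vertex `v` and two tree edges `vu`, `vw`. Since `G - v` is connected,
some walk in `G - v` leads from `u` to `w`. Each time it crosses from one branch of `T - v` to
another, it uses a non-tree edge whose fundamental cycle passes through `v` and enters and
leaves `v` through the tree edges to those two branches. Hence all tree edges at `v` have the
same status. Since `T` is connected, this status is the same for every tree edge, and then for
every edge. -/

namespace SimpleGraph

variable {V : Type*} {G : SimpleGraph V}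

theorem Reachable.induction_on_adj {P : V → Prop} (hP : ∀ ⦃x y⦄, G.Adj x y → P x → P y)
    {u v : V} (h : G.Reachable u v) (hu : P u) : P v := by
  obtain ⟨w⟩ := h
  induction w with
  | nil => exact hu
  | cons hxy _ ih => exact ih (hP hxy hu)

def InBranch (G : SimpleGraph V) (v u x : V) : Prop :=
  G.Adj v u ∧ ∃ w : G.Walk u x, v ∉ w.support

theorem inBranch_self {v u : V} (h : G.Adj v u) : G.InBranch v u u :=
  ⟨h, .nil, by simpa using h.ne⟩

theorem InBranch.append {v u x y : V} (h : G.InBranch v u x) (w : G.Walk x y)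
    (hw : v ∉ w.support) : G.InBranch v u y := by
  obtain ⟨hvu, w₀, hw₀⟩ := h
  exact ⟨hvu, w₀.append w, by simp [Walk.mem_support_append_iff, hw₀, hw]⟩

theorem IsAcyclic.eq_of_inBranch (hG : G.IsAcyclic) {v u u' x : V} (h : G.InBranch v u x)
    (h' : G.InBranch v u' x) : u = u' := by
  classical
  obtain ⟨hvu, w, hw⟩ := h
  obtain ⟨hvu', w', hw'⟩ := h'
  have hpath := (hG.subsingleton_path v x).elim
    ⟨.cons hvu w.bypass,
      w.bypass_isPath.cons fun h => hw (w.support_bypass_subset_support h)⟩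
    ⟨.cons hvu' w'.bypass,
      w'.bypass_isPath.cons fun h => hw' (w'.support_bypass_subset_support h)⟩
  simpa using congrArg (fun p : G.Path v x => p.1.snd) hpath

theorem Walk.IsPath.exists_dart_inBranch {v x : V} {p : G.Walk v x} (hp : p.IsPath)
    (hx : x ≠ v) : ∃ d ∈ p.darts, d.fst = v ∧ G.InBranch v d.snd x := by
  cases p with
  | nil => exact absurd rfl hx
  | cons h q => exact ⟨⟨(v, _), h⟩, by simp, rfl, h, q, ((Walk.cons_isPath_iff _ _).1 hp).2⟩

theorem Walk.IsPath.exists_darts_through {v x y : V} {p : G.Walk y x} (hp : p.IsPath)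
    (hv : v ∈ p.support) (hx : x ≠ v) (hy : y ≠ v) :
    ∃ d₁ ∈ p.darts, ∃ d₂ ∈ p.darts, d₁.snd = v ∧ d₂.fst = v ∧
      G.InBranch v d₁.fst y ∧ G.InBranch v d₂.snd x := by
  classical
  obtain ⟨d₁, hd₁, hd₁v, hb₁⟩ := (hp.takeUntil hv).reverse.exists_dart_inBranch hy
  obtain ⟨d₂, hd₂, hd₂v, hb₂⟩ := (hp.dropUntil hv).exists_dart_inBranch hx
  have hdarts : p.darts = (p.takeUntil v hv).darts ++ (p.dropUntil v hv).darts := by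
    rw [← Walk.darts_append, Walk.take_spec]
  refine ⟨d₁.symm, ?_, d₂, hdarts ▸ List.mem_append_right _ hd₂, hd₁v, hd₂v, hb₁, hb₂⟩
  rw [hdarts]
  simp only [Walk.darts_reverse, List.mem_reverse, List.mem_map] at hd₁
  obtain ⟨d, hd, rfl⟩ := hd₁
  simpa using List.mem_append_left _ hd

end SimpleGraph

section Orientations

variable {V : Type*} {G T : SimpleGraph V} {O O₁ O₂ : V → V → Prop}

def Agree (O₁ O₂ : V → V → Prop) (u v : V) : Prop := O₁ u v ↔ O₂ u v

namespace IsOrientation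

theorem not_of_not_adj (hO : IsOrientation G O) {u v : V} (h : ¬ G.Adj u v) : ¬ O u v :=
  fun huv => h ((hO.1 u v).2 (.inl huv))

theorem swap_iff_not (hO : IsOrientation G O) {u v : V} (h : G.Adj u v) : O v u ↔ ¬ O u v :=
  ⟨hO.2 v u, ((hO.1 u v).1 h).resolve_left⟩

theorem agree_of_not_adj (hO₁ : IsOrientation G O₁) (hO₂ : IsOrientation G O₂) {u v : V}
    (h : ¬ G.Adj u v) : Agree O₁ O₂ u v :=
  iff_of_false (hO₁.not_of_not_adj h) (hO₂.not_of_not_adj h)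

theorem agree_swap (hO₁ : IsOrientation G O₁) (hO₂ : IsOrientation G O₂) (u v : V) :
    Agree O₁ O₂ v u ↔ Agree O₁ O₂ u v := by
  by_cases h : G.Adj u v
  · unfold Agree
    rw [hO₁.swap_iff_not h, hO₂.swap_iff_not h, not_iff_not]
  · exact iff_of_true (hO₁.agree_of_not_adj hO₂ fun h' => h h'.symm) (hO₁.agree_of_not_adj hO₂ h)

theorem eq_of_agree (hO₁ : IsOrientation G O₁) (hO₂ : IsOrientation G O₂)
    (h : ∀ u v, G.Adj u v → Agree O₁ O₂ u v) (u v : V) : O₂ u v ↔ O₁ u v := by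
  by_cases huv : G.Adj u v
  · exact (h u v huv).symm
  · exact (hO₁.agree_of_not_adj hO₂ huv).symm

theorem eq_swap_of_disagree (hO₁ : IsOrientation G O₁) (hO₂ : IsOrientation G O₂)
    (h : ∀ u v, G.Adj u v → ¬ Agree O₁ O₂ u v) (u v : V) : O₂ u v ↔ O₁ v u := by
  by_cases huv : G.Adj u v
  · rw [hO₁.swap_iff_not huv]
    exact (not_iff.1 (h u v huv)).symm
  · exact iff_of_false (hO₂.not_of_not_adj huv) (hO₁.not_of_not_adj fun h' => huv h'.symm)

end IsOrientation

theorem GoodOrient.dart_iff (hO : IsOrientation G O) (hg : GoodOrient G T O) {x y : V}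
    (hxy : G.Adj x y) (hnt : ¬ T.Adj x y) {p : T.Walk y x} (hp : p.IsPath) {d : T.Dart}
    (hd : d ∈ p.darts) : O d.fst d.snd ↔ O x y := by
  rcases hg x y hxy hnt p hp with ⟨hxy', hfwd⟩ | ⟨hyx, hbwd⟩
  · exact iff_of_true (hfwd d hd) hxy'
  · exact iff_of_false (hO.2 _ _ (hbwd d hd)) (hO.2 _ _ hyx)

theorem agree_dart_iff (hO₁ : IsOrientation G O₁) (hO₂ : IsOrientation G O₂)
    (hg₁ : GoodOrient G T O₁) (hg₂ : GoodOrient G T O₂) {x y : V}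
    (hxy : G.Adj x y) (hnt : ¬ T.Adj x y) {p : T.Walk y x} (hp : p.IsPath) {d : T.Dart}
    (hd : d ∈ p.darts) : Agree O₁ O₂ d.fst d.snd ↔ Agree O₁ O₂ x y := by
  unfold Agree
  rw [hg₁.dart_iff hO₁ hxy hnt hp hd, hg₂.dart_iff hO₂ hxy hnt hp hd]

theorem exists_inBranch_agree_iff_of_adj (hT : T.IsTree)
    (hO₁ : IsOrientation G O₁) (hO₂ : IsOrientation G O₂)
    (hg₁ : GoodOrient G T O₁) (hg₂ : GoodOrient G T O₂) {v x y u : V}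
    (hxy : G.Adj x y) (hx : x ≠ v) (hy : y ≠ v) (hb : T.InBranch v u x) :
    ∃ u', T.InBranch v u' y ∧ (Agree O₁ O₂ v u' ↔ Agree O₁ O₂ v u) := by
  by_cases hTxy : T.Adj x y
  · exact ⟨u, hb.append (.cons hTxy .nil) (by simp [hx.symm, hy.symm]), Iff.rfl⟩
  obtain ⟨p, hp, -⟩ := hT.existsUnique_path y x
  by_cases hvp : v ∈ p.support
  · obtain ⟨d₁, hd₁, d₂, hd₂, hd₁v, hd₂v, hb₁, hb₂⟩ := hp.exists_darts_through hvp hx hy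
    have hu : d₂.snd = u := hT.isAcyclic.eq_of_inBranch hb₂ hb
    refine ⟨d₁.fst, hb₁, ?_⟩
    calc Agree O₁ O₂ v d₁.fst ↔ Agree O₁ O₂ d₁.fst d₁.snd := by
          rw [hd₁v]; exact hO₁.agree_swap hO₂ _ _
      _ ↔ Agree O₁ O₂ x y := agree_dart_iff hO₁ hO₂ hg₁ hg₂ hxy hTxy hp hd₁
      _ ↔ Agree O₁ O₂ d₂.fst d₂.snd := (agree_dart_iff hO₁ hO₂ hg₁ hg₂ hxy hTxy hp hd₂).symm
      _ ↔ Agree O₁ O₂ v u := by rw [hd₂v, hu]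
  · exact ⟨u, hb.append p.reverse (by simpa using hvp), Iff.rfl⟩

theorem agree_iff_of_tree_adj_of_tree_adj (hT : T.IsTree)
    (hO₁ : IsOrientation G O₁) (hO₂ : IsOrientation G O₂)
    (hg₁ : GoodOrient G T O₁) (hg₂ : GoodOrient G T O₂) {v u w : V}
    (hv : (G.induce {v}ᶜ).Connected) (hu : T.Adj v u) (hw : T.Adj v w) :
    Agree O₁ O₂ v u ↔ Agree O₁ O₂ v w := by
  let P (x : ({v}ᶜ : Set V)) : Prop :=
    ∃ u', T.InBranch v u' x ∧ (Agree O₁ O₂ v u' ↔ Agree O₁ O₂ v u)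
  have step {x y : ({v}ᶜ : Set V)} (hxy : (G.induce {v}ᶜ).Adj x y) : P x → P y := by
    rintro ⟨u', hb, hiff⟩
    obtain ⟨u'', hb', hiff'⟩ := exists_inBranch_agree_iff_of_adj hT hO₁ hO₂ hg₁ hg₂ hxy x.2 y.2 hb
    exact ⟨u'', hb', hiff'.trans hiff⟩
  have hPw : P ⟨w, hw.ne'⟩ :=
    (hv.preconnected ⟨u, hu.ne'⟩ ⟨w, hw.ne'⟩).induction_on_adj (P := P) (fun _ _ => step)
      ⟨u, inBranch_self hu, Iff.rfl⟩
  obtain ⟨u', hb, hiff⟩ := hPw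
  rw [hT.isAcyclic.eq_of_inBranch hb (inBranch_self hw)] at hiff
  exact hiff.symm

theorem agree_iff_of_tree_adj (hcut : ∀ v : V, (G.induce {v}ᶜ).Connected) (hT : T.IsTree)
    (hO₁ : IsOrientation G O₁) (hO₂ : IsOrientation G O₂)
    (hg₁ : GoodOrient G T O₁) (hg₂ : GoodOrient G T O₂) {a b a' b' : V}
    (hab : T.Adj a b) (hab' : T.Adj a' b') :
    Agree O₁ O₂ a b ↔ Agree O₁ O₂ a' b' := by
  have atVertex {v u w : V} (hu : T.Adj v u) (hw : T.Adj v w) :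
      Agree O₁ O₂ v u ↔ Agree O₁ O₂ v w :=
    agree_iff_of_tree_adj_of_tree_adj hT hO₁ hO₂ hg₁ hg₂ (hcut v) hu hw
  let P (x : V) : Prop := ∀ y, T.Adj x y → (Agree O₁ O₂ x y ↔ Agree O₁ O₂ a b)
  have step {x z : V} (hxz : T.Adj x z) (hx : P x) : P z := fun y hzy =>
    calc Agree O₁ O₂ z y ↔ Agree O₁ O₂ z x := atVertex hzy hxz.symm
      _ ↔ Agree O₁ O₂ x z := hO₁.agree_swap hO₂ _ _
      _ ↔ Agree O₁ O₂ a b := hx z hxz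
  have hPa' : P a' :=
    (hT.connected a a').induction_on_adj (P := P) (fun _ _ => step) fun y hay => atVertex hay hab
  exact (hPa' b' hab').symm

theorem exists_tree_adj_agree_iff (hT : T.IsTree)
    (hO₁ : IsOrientation G O₁) (hO₂ : IsOrientation G O₂)
    (hg₁ : GoodOrient G T O₁) (hg₂ : GoodOrient G T O₂) {x y : V} (hxy : G.Adj x y) :
    ∃ a b, T.Adj a b ∧ (Agree O₁ O₂ x y ↔ Agree O₁ O₂ a b) := by
  by_cases hTxy : T.Adj x y
  · exact ⟨x, y, hTxy, Iff.rfl⟩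
  obtain ⟨p, hp, -⟩ := hT.existsUnique_path y x
  obtain ⟨d, hd, -⟩ := hp.exists_dart_inBranch hxy.ne
  exact ⟨d.fst, d.snd, d.adj, (agree_dart_iff hO₁ hO₂ hg₁ hg₂ hxy hTxy hp hd).symm⟩

end Orientations

theorem stmt17_general {V : Type*} (G T : SimpleGraph V) (h2 : KConnected 2 G)
    (hT : T.IsTree)
    (O₁ O₂ : V → V → Prop)
    (hO₁ : IsOrientation G O₁) (hO₂ : IsOrientation G O₂)
    (hg₁ : GoodOrient G T O₁) (hg₂ : GoodOrient G T O₂) :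
    (∀ u v, O₂ u v ↔ O₁ u v) ∨ (∀ u v, O₂ u v ↔ O₁ v u) := by
  have hcut (v : V) : (G.induce {v}ᶜ).Connected := h2.2 {v} (by simp)
  have hconst {x y x' y' : V} (hxy : G.Adj x y) (hxy' : G.Adj x' y') :
      Agree O₁ O₂ x y ↔ Agree O₁ O₂ x' y' := by
    obtain ⟨a, b, hab, hiff⟩ := exists_tree_adj_agree_iff hT hO₁ hO₂ hg₁ hg₂ hxy
    obtain ⟨a', b', hab', hiff'⟩ := exists_tree_adj_agree_iff hT hO₁ hO₂ hg₁ hg₂ hxy'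
    exact hiff.trans ((agree_iff_of_tree_adj hcut hT hO₁ hO₂ hg₁ hg₂ hab hab').trans hiff'.symm)
  by_cases hdis : ∃ x y, G.Adj x y ∧ ¬ Agree O₁ O₂ x y
  · obtain ⟨x, y, hxy, hn⟩ := hdis
    exact .inr (hO₁.eq_swap_of_disagree hO₂ fun u v huv => (hconst hxy huv).not.mp hn)
  · push Not at hdis
    exact .inl (hO₁.eq_of_agree hO₂ hdis)

/-- for a 2-connected graph `G` with spanning tree `T`, any two
orientations of `G` making every fundamental cycle of `T` directed are equal or
reverses of each other (so there are at most two such orientations). -/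
theorem stmt17 {V : Type*} [Fintype V] (G T : SimpleGraph V) (h2 : KConnected 2 G)
    (hTG : T ≤ G) (hT : T.IsTree)
    (O₁ O₂ : V → V → Prop)
    (hO₁ : IsOrientation G O₁) (hO₂ : IsOrientation G O₂)
    (hg₁ : GoodOrient G T O₁) (hg₂ : GoodOrient G T O₂) :
    (∀ u v, O₂ u v ↔ O₁ u v) ∨ (∀ u v, O₂ u v ↔ O₁ v u) :=
  stmt17_general G T h2 hT O₁ O₂ hO₁ hO₂ hg₁ hg₂
end
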